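/- arXiv:math/0001036 — 9 statements merged into one kernel-verified Lean document; each statement's English description precedes it below -/
import Mathlib

section
/- For every complex number z with 0 < Re z and z ≠ 1, the partial sums of the alternating series converge: the sequence N ↦ ∑_{n=1}^{N} (-1)^n / n^z tends (as N → ∞) to ζ(z)·(2^{1-z} − 1), where ζ is the Riemann zeta function and n^z, 2^{1-z} denote principal-branch complex powers. -/
open Filter Finset Topology Complex

/-!
Pairing consecutive terms, the partial sums converge for `0 < re z` to
`η(z) = ∑ₖ ((2k+2)^(-z) - (2k+1)^(-z))`; by the mean value theorem the `k`-th pair is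
`O(‖z‖ (k+1)^(-re z - 1))` locally uniformly, so `η` is holomorphic on the half-plane.
For `1 < re z`, doubling the even terms gives `η(z) = (2^(1-z) - 1) ζ(z)`. Both sides are
continued by the L-function of the sign function `j ↦ (-1)^j` on `ZMod 2`, which is entire
because the signs sum to zero, so the identity theorem on the half-plane and on `ℂ \ {1}`
carries the identity over.
-/

theorem Filter.Tendsto.of_comp_two_mul {α : Type*} {f : ℕ → α} {l : Filter α}
    (he : Tendsto (fun k => f (2 * k)) atTop l) (ho : Tendsto (fun k => f (2 * k + 1)) atTop l) :
    Tendsto f atTop l := by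
  intro s hs
  obtain ⟨a, ha⟩ := mem_atTop_sets.1 (he hs)
  obtain ⟨b, hb⟩ := mem_atTop_sets.1 (ho hs)
  refine mem_atTop_sets.2 ⟨2 * (a + b), fun n hn => ?_⟩
  obtain ⟨k, rfl | rfl⟩ := Nat.even_or_odd' n
  · exact ha k (by omega)
  · exact hb k (by omega)

theorem Finset.sum_range_two_mul {M : Type*} [AddCommMonoid M] (b : ℕ → M) (k : ℕ) :
    ∑ n ∈ range (2 * k), b n = ∑ i ∈ range k, (b (2 * i) + b (2 * i + 1)) := by
  induction k with
  | zero => simp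
  | succ k ih => rw [Nat.mul_succ, sum_range_succ, sum_range_succ, sum_range_succ, ih, add_assoc]

theorem tendsto_sum_range_of_hasSum_pairs {M : Type*} [TopologicalSpace M] [AddCommMonoid M]
    [ContinuousAdd M] {b : ℕ → M} {L : M} (hb : Tendsto b atTop (𝓝 0))
    (h : HasSum (fun i => b (2 * i) + b (2 * i + 1)) L) :
    Tendsto (fun N => ∑ n ∈ range N, b n) atTop (𝓝 L) := by
  have heven : Tendsto (fun k => ∑ n ∈ range (2 * k), b n) atTop (𝓝 L) := by
    simpa only [sum_range_two_mul] using h.tendsto_sum_nat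
  refine .of_comp_two_mul heven ?_
  have hb' : Tendsto (fun k => b (2 * k)) atTop (𝓝 0) :=
    hb.comp (tendsto_id.const_mul_atTop' two_pos)
  simpa only [sum_range_succ, add_zero] using heven.add hb'

theorem Finset.sum_Icc_one_eq_sum_range {M : Type*} [AddCommMonoid M] (f : ℕ → M) (N : ℕ) :
    ∑ n ∈ Icc 1 N, f n = ∑ n ∈ range N, f (n + 1) := by
  rw [range_eq_Ico, sum_Ico_add' f 0 N 1]
  rfl

theorem summable_nat_add_one_rpow {p : ℝ} (hp : p < -1) :
    Summable (fun k : ℕ => ((k : ℝ) + 1) ^ p) := by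
  exact_mod_cast (summable_nat_add_iff 1).2 (Real.summable_nat_rpow.2 hp)

theorem norm_ofReal_cpow_neg_sub_le {a b : ℝ} (ha : 0 < a) (hab : a ≤ b) {z : ℂ}
    (hz : 0 ≤ z.re) :
    ‖(b : ℂ) ^ (-z) - (a : ℂ) ^ (-z)‖ ≤ ‖z‖ * a ^ (-z.re - 1) * (b - a) := by
  have hderiv : ∀ t ∈ Set.Icc a b,
      HasDerivWithinAt (fun t : ℝ => (t : ℂ) ^ (-z)) (-z * (t : ℂ) ^ (-z - 1))
        (Set.Icc a b) t := by
    intro t ht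
    have ht : (t : ℂ) ∈ slitPlane := ofReal_mem_slitPlane.2 (ha.trans_le ht.1)
    simpa using ((hasDerivAt_id (t : ℂ)).cpow_const (c := -z) ht).comp_ofReal.hasDerivWithinAt
  have hbound :
      ∀ t ∈ Set.Icc a b, ‖-z * (t : ℂ) ^ (-z - 1)‖ ≤ ‖z‖ * a ^ (-z.re - 1) := by
    intro t ht
    rw [norm_mul, norm_neg, norm_cpow_eq_rpow_re_of_pos (ha.trans_le ht.1)]
    simp only [sub_re, neg_re, one_re]
    exact mul_le_mul_of_nonneg_left (Real.rpow_le_rpow_of_nonpos ha ht.1 (by linarith))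
      (norm_nonneg z)
  simpa [abs_of_nonneg (sub_nonneg.2 hab)] using
    (convex_Icc a b).norm_image_sub_le_of_norm_hasDerivWithin_le hderiv hbound
      (Set.left_mem_Icc.2 hab) (Set.right_mem_Icc.2 hab)

theorem eqOn_of_eqOn_one_lt_re {f g : ℂ → ℂ} {U : Set ℂ} (hU : IsOpen U)
    (hUc : IsPreconnected U) (hsub : {w : ℂ | 1 < w.re} ⊆ U) (hf : DifferentiableOn ℂ f U)
    (hg : DifferentiableOn ℂ g U) (hfg : Set.EqOn f g {w : ℂ | 1 < w.re}) : Set.EqOn f g U := by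
  have h2 : (2 : ℂ) ∈ {w : ℂ | 1 < w.re} := by norm_num
  have hnhds : {w : ℂ | 1 < w.re} ∈ 𝓝 (2 : ℂ) :=
    (isOpen_lt continuous_const continuous_re).mem_nhds h2
  exact (hf.analyticOnNhd hU).eqOn_of_preconnected_of_eventuallyEq (hg.analyticOnNhd hU) hUc
    (hsub h2) (eventuallyEq_of_mem hnhds hfg)

noncomputable def etaPair (z : ℂ) (k : ℕ) : ℂ :=
  ((2 * k + 2 : ℕ) : ℂ) ^ (-z) - ((2 * k + 1 : ℕ) : ℂ) ^ (-z)

theorem etaPair_eq (z : ℂ) (k : ℕ) :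
    etaPair z k = (-1) ^ (2 * k + 1) / ((2 * k + 1 : ℕ) : ℂ) ^ z
      + (-1) ^ (2 * k + 1 + 1) / ((2 * k + 1 + 1 : ℕ) : ℂ) ^ z := by
  rw [(odd_two_mul_add_one k).neg_one_pow, (odd_two_mul_add_one k).add_one.neg_one_pow, etaPair,
    cpow_neg, cpow_neg]
  push_cast
  ring_nf

theorem differentiable_etaPair (k : ℕ) : Differentiable ℂ (etaPair · k) := by
  have hne (n : ℕ) : ((n + 1 : ℕ) : ℂ) ≠ 0 := Nat.cast_ne_zero.2 n.succ_ne_zero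
  exact (differentiable_neg.const_cpow (.inl (hne _))).sub
    (differentiable_neg.const_cpow (.inl (hne _)))

theorem norm_etaPair_le {z : ℂ} (hz : 0 ≤ z.re) (k : ℕ) :
    ‖etaPair z k‖ ≤ ‖z‖ * ((k : ℝ) + 1) ^ (-z.re - 1) := by
  have h := norm_ofReal_cpow_neg_sub_le (a := (2 * k + 1 : ℕ)) (b := (2 * k + 2 : ℕ))
    (by positivity) (by gcongr; omega) hz
  have hgap : ((2 * k + 2 : ℕ) : ℝ) - (2 * k + 1 : ℕ) = 1 := by push_cast; ring
  rw [hgap, mul_one] at h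
  simp only [ofReal_natCast] at h
  refine h.trans (mul_le_mul_of_nonneg_left ?_ (norm_nonneg z))
  exact Real.rpow_le_rpow_of_nonpos (by positivity) (by push_cast; linarith) (by linarith)

theorem summable_etaPair {z : ℂ} (hz : 0 < z.re) : Summable (etaPair z) :=
  .of_norm_bounded ((summable_nat_add_one_rpow (by linarith : -z.re - 1 < -1)).mul_left ‖z‖)
    (norm_etaPair_le hz.le)

/-- For `re z ≤ 0` this pairing of the series is not Dirichlet's `η(z)`. -/
noncomputable def dirichletEta (z : ℂ) : ℂ := ∑' k, etaPair z k

theorem hasSum_dirichletEta {z : ℂ} (hz : 0 < z.re) : HasSum (etaPair z) (dirichletEta z) :=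
  (summable_etaPair hz).hasSum

theorem differentiableOn_dirichletEta : DifferentiableOn ℂ dirichletEta {z | 0 < z.re} := by
  intro z₀ hz₀
  set σ := z₀.re / 2
  set R := ‖z₀‖ + 1
  have hU : IsOpen {w : ℂ | σ < w.re ∧ ‖w‖ < R} :=
    (isOpen_lt continuous_const continuous_re).inter (isOpen_lt continuous_norm continuous_const)
  have hz₀U : z₀ ∈ {w : ℂ | σ < w.re ∧ ‖w‖ < R} :=
    ⟨by simp only [σ]; linarith [hz₀.out], by simp [R]⟩
  have hσ : 0 < σ := half_pos hz₀
  have hbound (k : ℕ) (w : ℂ) (hw : w ∈ {w : ℂ | σ < w.re ∧ ‖w‖ < R}) :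
      ‖etaPair w k‖ ≤ R * ((k : ℝ) + 1) ^ (-σ - 1) := by
    refine (norm_etaPair_le (hσ.trans hw.1).le k).trans ?_
    have hk : (1 : ℝ) ≤ k + 1 := le_add_of_nonneg_left k.cast_nonneg
    exact mul_le_mul hw.2.le (Real.rpow_le_rpow_of_exponent_le hk (by linarith [hw.1]))
      (by positivity) (by positivity)
  have hsum := (summable_nat_add_one_rpow (by linarith : -σ - 1 < -1)).mul_left R
  exact ((differentiableOn_tsum_of_summable_norm hsum
    (fun k => (differentiable_etaPair k).differentiableOn) hU hbound).differentiableAt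
    (hU.mem_nhds hz₀U)).differentiableWithinAt

theorem tendsto_sum_neg_one_pow_div_cpow_dirichletEta {z : ℂ} (hz : 0 < z.re) :
    Tendsto (fun N : ℕ => ∑ n ∈ Icc 1 N, (-1 : ℂ) ^ n / (n : ℂ) ^ z) atTop
      (𝓝 (dirichletEta z)) := by
  simp only [sum_Icc_one_eq_sum_range]
  refine tendsto_sum_range_of_hasSum_pairs ?_ ?_
  · rw [tendsto_zero_iff_norm_tendsto_zero]
    have h := (tendsto_rpow_neg_atTop hz).comp
      (tendsto_natCast_atTop_atTop.comp (tendsto_add_atTop_nat 1))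
    refine h.congr fun n => ?_
    simp only [Function.comp_apply, norm_div, norm_pow, norm_neg, norm_one, one_pow, one_div,
      norm_natCast_cpow_of_pos n.succ_pos, Real.rpow_neg (Nat.cast_nonneg _)]
  · simpa only [← etaPair_eq] using hasSum_dirichletEta hz

theorem hasSum_neg_one_pow_div_cpow {s : ℂ} (hs : 1 < s.re) :
    HasSum (fun n : ℕ => (-1 : ℂ) ^ n / (n : ℂ) ^ s)
      (riemannZeta s * ((2 : ℂ) ^ (1 - s) - 1)) := by
  have hζ : HasSum (fun n : ℕ => 1 / (n : ℂ) ^ s) (riemannZeta s) := by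
    rw [zeta_eq_tsum_one_div_nat_cpow hs]
    exact (summable_one_div_nat_cpow.2 hs).hasSum
  -- `(-1)^n = 2 [n even] - 1`, and `2 / (2k)^s = 2^(1-s) / k^s`
  have hevens : HasSum (fun n : ℕ => if Even n then 2 / (n : ℂ) ^ s else 0)
      ((2 : ℂ) ^ (1 - s) * riemannZeta s + 0) := by
    refine .even_add_odd ((hζ.mul_left _).congr_fun fun k => ?_)
      (hasSum_zero.congr_fun fun k => ?_)
    · have h2k := natCast_mul_natCast_cpow 2 k s
      push_cast at h2k ⊢
      rw [if_pos (even_two_mul k), h2k, cpow_sub _ _ two_ne_zero, cpow_one]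
      ring
    · simp
  rw [add_zero] at hevens
  rw [show riemannZeta s * ((2 : ℂ) ^ (1 - s) - 1) = 2 ^ (1 - s) * riemannZeta s - riemannZeta s
    by ring]
  refine (hevens.sub hζ).congr_fun fun n => ?_
  rcases n.even_or_odd with he | ho
  · rw [he.neg_one_pow, if_pos he]; ring
  · rw [ho.neg_one_pow, if_neg (Nat.not_even_iff_odd.2 ho)]; ring

theorem dirichletEta_eq_of_one_lt_re {s : ℂ} (hs : 1 < s.re) :
    dirichletEta s = riemannZeta s * ((2 : ℂ) ^ (1 - s) - 1) := by
  refine tendsto_nhds_unique (tendsto_sum_neg_one_pow_div_cpow_dirichletEta (by linarith)) ?_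
  have h := ((hasSum_nat_add_iff' 1).2 (hasSum_neg_one_pow_div_cpow hs)).tendsto_sum_nat
  simpa [sum_Icc_one_eq_sum_range, zero_cpow (ne_zero_of_one_lt_re hs)] using h

noncomputable def altSign (j : ZMod 2) : ℂ := (-1) ^ j.val

theorem sum_altSign : ∑ j, altSign j = 0 := by
  change ∑ j : Fin 2, (-1 : ℂ) ^ (j : ℕ) = 0
  simp [Fin.sum_univ_two]

theorem altSign_natCast (n : ℕ) : altSign n = (-1) ^ n := by
  rw [altSign, ZMod.val_natCast, ← neg_one_pow_eq_pow_mod_two]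

theorem LFunction_altSign_of_one_lt_re {s : ℂ} (hs : 1 < s.re) :
    ZMod.LFunction altSign s = riemannZeta s * ((2 : ℂ) ^ (1 - s) - 1) := by
  rw [ZMod.LFunction_eq_LSeries _ hs, LSeries]
  refine ((hasSum_neg_one_pow_div_cpow hs).congr_fun fun n => ?_).tsum_eq
  rcases eq_or_ne n 0 with rfl | hn
  · simp [zero_cpow (ne_zero_of_one_lt_re hs)]
  · rw [LSeries.term_of_ne_zero hn, altSign_natCast]

theorem LFunction_altSign {s : ℂ} (hs : s ≠ 1) :
    ZMod.LFunction altSign s = riemannZeta s * ((2 : ℂ) ^ (1 - s) - 1) := by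
  have hζ : DifferentiableOn ℂ (fun w => riemannZeta w * ((2 : ℂ) ^ (1 - w) - 1)) {1}ᶜ :=
    fun w hw => ((differentiableAt_riemannZeta hw).mul
      ((((differentiable_const _).sub differentiable_id).const_cpow (.inl two_ne_zero)).sub
        (differentiable_const _)).differentiableAt).differentiableWithinAt
  refine eqOn_of_eqOn_one_lt_re isOpen_compl_singleton
    (isConnected_compl_singleton_of_one_lt_rank (by simp) _).isPreconnected
    (fun w hw h1 => by rw [Set.mem_singleton_iff.1 h1] at hw; norm_num at hw)
    (ZMod.differentiable_LFunction_of_sum_zero sum_altSign).differentiableOn hζ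
    (fun _ => LFunction_altSign_of_one_lt_re) hs

theorem dirichletEta_eq_LFunction_altSign {s : ℂ} (hs : 0 < s.re) :
    dirichletEta s = ZMod.LFunction altSign s :=
  eqOn_of_eqOn_one_lt_re (isOpen_lt continuous_const continuous_re)
    (convex_halfSpace_re_gt 0).isPreconnected
    (fun w (hw : 1 < w.re) => show 0 < w.re by linarith)
    differentiableOn_dirichletEta
    (ZMod.differentiable_LFunction_of_sum_zero sum_altSign).differentiableOn
    (fun w hw => by rw [dirichletEta_eq_of_one_lt_re hw, LFunction_altSign_of_one_lt_re hw]) hs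

/-- For every complex `z` with `0 < Re z` and `z ≠ 1`, the partial sums
`∑_{n=1}^{N} (-1)^n / n^z` tend to `ζ(z) * (2^(1-z) - 1)` as `N → ∞`. -/
theorem alternating_zeta_partial_sums (z : ℂ) (hre : 0 < z.re) (hz : z ≠ 1) :
    Tendsto (fun N : ℕ => ∑ n ∈ Finset.Icc 1 N, (-1 : ℂ) ^ n / (n : ℂ) ^ z)
      atTop (nhds (riemannZeta z * ((2 : ℂ) ^ ((1 : ℂ) - z) - 1))) := by
  rw [← LFunction_altSign hz, ← dirichletEta_eq_LFunction_altSign hre]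
  exact tendsto_sum_neg_one_pow_div_cpow_dirichletEta hre
end

section
/- Let f : ℂ → ℂ be holomorphic on the open unit disk with ∫_{|w|<1} |f(w)|² dA(w) < ∞, where dA is Lebesgue area measure on ℂ. Then for every z with |z| < 1, f(z) = (1/π) ∫_{|w|<1} f(w) / (1 − z·conj(w))² dA(w). -/
/-!
Both `f` and the kernel are expanded in power series: `f w = ∑ aₘ wᵐ` and
`(1 - z w̄)⁻² = ∑ (n + 1) zⁿ w̄ⁿ`. Rotation invariance of the disk makes the monomials orthogonal,
and `∫_{|w|<r} |w|²ⁿ dA = π r²ⁿ⁺² / (n + 1)`, so on a smaller disk `|w| < r`, where all series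
converge absolutely, `∫_{|w|<r} f w (1 - z w̄)⁻² dA = π r² f (r² z)`. As `r → 1` the right side tends
to `π f z`, and since `f` is square-integrable, hence integrable, on the unit disk, the left side
tends to the integral over the whole disk.
-/

open MeasureTheory Metric Filter Set Topology ComplexConjugate Real

theorem summable_norm_mul_pow_of_summable_mul_pow {𝕜 : Type*} [NormedField 𝕜] {a : ℕ → 𝕜}
    {x : 𝕜} {t : ℝ} (ht : 0 ≤ t) (htx : t < ‖x‖) (hs : Summable fun m => a m * x ^ m) :
    Summable fun m => ‖a m‖ * t ^ m := by
  have hx : 0 < ‖x‖ := ht.trans_lt htx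
  obtain ⟨C, hC⟩ := hs.tendsto_atTop_zero.norm.bddAbove_range
  have hq : t / ‖x‖ < 1 := (div_lt_one hx).2 htx
  refine .of_nonneg_of_le (fun m => by positivity) (fun m => ?_)
    ((summable_geometric_of_lt_one (by positivity) hq).mul_left C)
  have hbound : ‖a m‖ * ‖x‖ ^ m ≤ C := by simpa using hC (mem_range_self m)
  calc ‖a m‖ * t ^ m = ‖a m‖ * ‖x‖ ^ m * (t / ‖x‖) ^ m := by
        rw [mul_assoc, ← mul_pow, mul_div_cancel₀ t hx.ne']
    _ ≤ C * (t / ‖x‖) ^ m := by gcongr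

theorem summable_norm_mul_pow_of_summable_on_ball {a : ℕ → ℂ} {R r : ℝ}
    (hs : ∀ w ∈ ball (0 : ℂ) R, Summable fun m => a m * w ^ m) (hr : 0 ≤ r) (hrR : r < R) :
    Summable fun m => ‖a m‖ * r ^ m := by
  obtain ⟨ρ, hrρ, hρR⟩ := exists_between hrR
  have hρ : ‖(ρ : ℂ)‖ = ρ := by rw [Complex.norm_real, Real.norm_of_nonneg (hr.trans hrρ.le)]
  exact summable_norm_mul_pow_of_summable_mul_pow hr (hρ.symm ▸ hrρ)
    (hs ρ (by rwa [mem_ball_zero_iff, hρ]))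

theorem hasSum_succ_mul_geometric {𝕜 : Type*} [NormedDivisionRing 𝕜] {u : 𝕜} (hu : ‖u‖ < 1) :
    HasSum (fun n : ℕ => ((n : 𝕜) + 1) * u ^ n) (1 / (1 - u) ^ 2) := by
  simpa using hasSum_choose_mul_geometric_of_norm_lt_one 1 hu

theorem hasSum_setIntegral_of_hasSum {α E ι : Type*} [MeasurableSpace α] [NormedAddCommGroup E]
    [NormedSpace ℝ E] [Countable ι] {μ : Measure α} {s : Set α} {F : ι → α → E} {f : α → E}
    (hs : MeasurableSet s) (hF : ∀ x ∈ s, HasSum (fun i => F i x) (f x))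
    (hFi : ∀ i, IntegrableOn (F i) s μ) (hsum : Summable fun i => ∫ x in s, ‖F i x‖ ∂μ) :
    HasSum (fun i => ∫ x in s, F i x ∂μ) (∫ x in s, f x ∂μ) := by
  rw [setIntegral_congr_fun hs fun x hx => (hF x hx).tsum_eq.symm]
  exact hasSum_integral_of_summable_integral_norm hFi hsum

theorem tendsto_setIntegral_ball_nhdsLT {X E : Type*} [PseudoMetricSpace X] [MeasurableSpace X]
    [OpensMeasurableSpace X] [NormedAddCommGroup E] [NormedSpace ℝ E] {μ : Measure X}
    {g : X → E} {c : X} {R : ℝ} (hg : IntegrableOn g (ball c R) μ) :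
    Tendsto (fun r => ∫ x in ball c r, g x ∂μ) (𝓝[<] R) (𝓝 (∫ x in ball c R, g x ∂μ)) := by
  have hunion : ⋃ r : Iio R, ball c r = ball c R := by
    refine subset_antisymm (iUnion_subset fun r => ball_subset_ball r.2.le) fun x hx => ?_
    obtain ⟨r, hxr, hrR⟩ := exists_between (mem_ball.1 hx)
    exact mem_iUnion.2 ⟨⟨r, hrR⟩, hxr⟩
  rw [← tendsto_comp_coe_Iio_atTop, ← hunion]
  exact tendsto_setIntegral_of_monotone (fun _ => measurableSet_ball)
    (fun r r' h => ball_subset_ball h) (hunion ▸ hg)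

theorem MeasureTheory.IntegrableOn.of_integrableOn_norm_sq {α E : Type*} [MeasurableSpace α]
    [NormedAddCommGroup E]
    {μ : Measure α} {s : Set α} {f : α → E} (hs : μ s ≠ ⊤)
    (hf : AEStronglyMeasurable f (μ.restrict s)) (h : IntegrableOn (fun x => ‖f x‖ ^ 2) s μ) :
    IntegrableOn f s μ := by
  have : IsFiniteMeasure (μ.restrict s) := isFiniteMeasure_restrict.2 hs
  exact ((memLp_two_iff_integrable_sq_norm hf).2 h).integrable one_le_two

theorem integral_ball_pow_mul_conj_pow_of_ne {m n : ℕ} (hmn : m ≠ n) (r : ℝ) :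
    ∫ w in ball (0 : ℂ) r, w ^ m * conj w ^ n = 0 := by
  -- rotating the disk by `e = exp (iπ / (m - n))` multiplies the integrand by `e ^ m ē ^ n = -1`
  set e : Circle := Circle.exp (π / ((m : ℝ) - n))
  have he : (e : ℂ) ^ m * conj (e : ℂ) ^ n = -1 := by
    have hmn' : ((m : ℂ) - n) ≠ 0 := sub_ne_zero.2 (by exact_mod_cast hmn)
    rw [Circle.coe_exp, ← Complex.exp_conj, ← Complex.exp_nat_mul, ← Complex.exp_nat_mul,
      ← Complex.exp_add, ← Complex.exp_pi_mul_I]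
    congr 1
    simp only [map_mul, Complex.conj_I, Complex.conj_ofReal]
    push_cast
    field_simp
    ring
  have hball : rotation e ⁻¹' ball (0 : ℂ) r = ball 0 r :=
    Set.ext fun w => by simp [map_zero]
  have hinv := (rotation e).measurePreserving.setIntegral_preimage_emb
    (rotation e).toHomeomorph.measurableEmbedding (fun w => w ^ m * conj w ^ n) (ball 0 r)
  simp only [hball, rotation_apply, map_mul, mul_pow] at hinv
  have hrot : ∀ w : ℂ, (e : ℂ) ^ m * w ^ m * (conj (e : ℂ) ^ n * conj w ^ n)
      = -(w ^ m * conj w ^ n) := fun w => by linear_combination (w ^ m * conj w ^ n) * he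
  simp only [hrot, integral_neg] at hinv
  linear_combination -hinv / 2

theorem integral_ball_norm_pow (k : ℕ) {r : ℝ} (hr : 0 ≤ r) :
    ∫ w in ball (0 : ℂ) r, ‖w‖ ^ k = 2 * π * r ^ (k + 2) / (k + 2) := by
  have hind : ∫ w in ball (0 : ℂ) r, ‖w‖ ^ k = ∫ w : ℂ, (Iio r).indicator (· ^ k) ‖w‖ := by
    rw [← integral_indicator measurableSet_ball]
    congr 1 with w
    simp only [indicator, mem_ball_zero_iff, mem_Iio]
  have hradial : ∫ y in Ioi (0 : ℝ), y ^ (2 - 1) • (Iio r).indicator (· ^ k) y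
      = r ^ (k + 2) / (k + 2) := by
    have h (y : ℝ) : y ^ (2 - 1) • (Iio r).indicator (· ^ k) y
        = (Iio r).indicator (· ^ (k + 1)) y := by
      simp only [indicator_apply]
      split_ifs <;> simp [pow_succ']
    simp_rw [h]
    rw [integral_indicator measurableSet_Iio, Measure.restrict_restrict measurableSet_Iio,
      Iio_inter_Ioi, ← integral_Ioc_eq_integral_Ioo, ← intervalIntegral.integral_of_le hr,
      integral_pow]
    push_cast
    ring
  rw [hind, integral_fun_norm_addHaar, Complex.finrank_real_complex, hradial, Measure.real,
    Complex.volume_ball]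
  simp only [ENNReal.ofReal_one, one_pow, one_mul, ENNReal.coe_toReal, NNReal.coe_real_pi,
    smul_eq_mul, nsmul_eq_mul, Nat.cast_ofNat]
  ring

theorem integral_ball_pow_mul_conj_pow_self (n : ℕ) {r : ℝ} (hr : 0 ≤ r) :
    ∫ w in ball (0 : ℂ) r, w ^ n * conj w ^ n = π * r ^ (2 * n + 2) / (n + 1) := by
  have h (w : ℂ) : w ^ n * conj w ^ n = ((‖w‖ ^ (2 * n) : ℝ) : ℂ) := by
    rw [← mul_pow, Complex.mul_conj, Complex.normSq_eq_norm_sq]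
    push_cast
    ring
  simp_rw [h]
  rw [integral_complex_ofReal, integral_ball_norm_pow _ hr]
  push_cast
  field_simp

theorem integral_ball_mul_conj_pow_of_hasSum {f : ℂ → ℂ} {a : ℕ → ℂ} {R r : ℝ}
    (ha : ∀ w ∈ ball (0 : ℂ) R, HasSum (fun m => a m * w ^ m) (f w)) (n : ℕ)
    (hr : 0 ≤ r) (hrR : r < R) :
    ∫ w in ball (0 : ℂ) r, f w * conj w ^ n = π * r ^ (2 * n + 2) / (n + 1) * a n := by
  set F : ℕ → ℂ → ℂ := fun m w => a m * (w ^ m * conj w ^ n)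
  have hFi (m : ℕ) : IntegrableOn (F m) (ball 0 r) :=
    ((Continuous.continuousOn (by fun_prop)).integrableOn_compact
      (isCompact_closedBall 0 r)).mono_set ball_subset_closedBall
  have hF (w : ℂ) (hw : w ∈ ball 0 r) : HasSum (fun m => F m w) (f w * conj w ^ n) := by
    simpa only [F, mul_assoc] using (ha w (ball_subset_ball hrR.le hw)).mul_right (conj w ^ n)
  have hsum : Summable fun m => ∫ w in ball 0 r, ‖F m w‖ := by
    refine .of_nonneg_of_le (fun m => integral_nonneg fun w => norm_nonneg _) (fun m => ?_)
      ((summable_norm_mul_pow_of_summable_on_ball (fun w hw => (ha w hw).summable) hr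
        hrR).mul_right (r ^ n * volume.real (ball (0 : ℂ) r)))
    calc ∫ w in ball 0 r, ‖F m w‖
        ≤ ∫ _ in ball (0 : ℂ) r, ‖a m‖ * r ^ m * r ^ n :=
          setIntegral_mono_on (hFi m).norm (integrableOn_const measure_ball_lt_top.ne)
            measurableSet_ball fun w hw => by
              have hw : ‖w‖ ≤ r := (mem_ball_zero_iff.1 hw).le
              simp only [F, norm_mul, norm_pow, RCLike.norm_conj, mul_assoc]
              gcongr
      _ = ‖a m‖ * r ^ m * (r ^ n * volume.real (ball (0 : ℂ) r)) := by
          rw [setIntegral_const, smul_eq_mul]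
          ring
  have hsingle : ∀ m ≠ n, ∫ w in ball 0 r, F m w = 0 := fun m hmn => by
    rw [integral_const_mul, integral_ball_pow_mul_conj_pow_of_ne hmn, mul_zero]
  rw [(hasSum_setIntegral_of_hasSum measurableSet_ball hF hFi hsum).unique
    (hasSum_single n hsingle), integral_const_mul, integral_ball_pow_mul_conj_pow_self n hr,
    mul_comm]

theorem norm_mul_conj_lt_one {z w : ℂ} {r : ℝ} (hz : ‖z‖ * r < 1) (hw : ‖w‖ ≤ r) :
    ‖z * conj w‖ < 1 := by
  rw [norm_mul, RCLike.norm_conj]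
  exact (mul_le_mul_of_nonneg_left hw (norm_nonneg z)).trans_lt hz

theorem hasSum_mul_div_one_sub_mul_conj_sq {z w : ℂ} (c : ℂ) (h : ‖z * conj w‖ < 1) :
    HasSum (fun n : ℕ => ((n : ℂ) + 1) * z ^ n * (c * conj w ^ n)) (c / (1 - z * conj w) ^ 2) := by
  have hterm : (fun n : ℕ => ((n : ℂ) + 1) * z ^ n * (c * conj w ^ n))
      = fun n : ℕ => c * (((n : ℂ) + 1) * (z * conj w) ^ n) := by
    ext n
    ring
  rw [hterm, div_eq_mul_one_div]
  exact (hasSum_succ_mul_geometric h).mul_left c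

theorem integral_ball_div_one_sub_mul_conj_sq_of_hasSum {f : ℂ → ℂ} {a : ℕ → ℂ} {R r : ℝ}
    {z : ℂ} (ha : ∀ w ∈ ball (0 : ℂ) R, HasSum (fun m => a m * w ^ m) (f w))
    (hfi : IntegrableOn f (ball 0 r)) (hr : 0 ≤ r) (hrR : r < R) (hz : ‖z‖ * r < 1) :
    ∫ w in ball (0 : ℂ) r, f w / (1 - z * conj w) ^ 2 = π * r ^ 2 * f (r ^ 2 * z) := by
  set G : ℕ → ℂ → ℂ := fun n w => ((n : ℂ) + 1) * z ^ n * (f w * conj w ^ n)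
  have hGi (n : ℕ) : IntegrableOn (G n) (ball 0 r) := by
    have hc : Continuous fun w : ℂ => conj w ^ n := by fun_prop
    exact (hfi.mul_continuousOn_of_subset hc.continuousOn measurableSet_ball
      (isCompact_closedBall 0 r) ball_subset_closedBall).const_mul _
  have hG (w : ℂ) (hw : w ∈ ball 0 r) : HasSum (fun n => G n w) (f w / (1 - z * conj w) ^ 2) :=
    hasSum_mul_div_one_sub_mul_conj_sq (f w) (norm_mul_conj_lt_one hz (mem_ball_zero_iff.1 hw).le)
  have hsum : Summable fun n => ∫ w in ball 0 r, ‖G n w‖ := by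
    have hq : ‖‖z‖ * r‖ < 1 := by rwa [Real.norm_of_nonneg (by positivity)]
    refine .of_nonneg_of_le (fun n => integral_nonneg fun w => norm_nonneg _) (fun n => ?_)
      ((hasSum_succ_mul_geometric hq).summable.mul_right
        (∫ w in ball (0 : ℂ) r, ‖f w‖))
    calc ∫ w in ball 0 r, ‖G n w‖
        ≤ ∫ w in ball (0 : ℂ) r, ((n : ℝ) + 1) * (‖z‖ * r) ^ n * ‖f w‖ :=
          setIntegral_mono_on (hGi n).norm (hfi.norm.const_mul _) measurableSet_ball
            fun w hw => by
              have hn : ‖(n : ℂ) + 1‖ = n + 1 := by exact_mod_cast Complex.norm_natCast (n + 1)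
              calc ‖G n w‖ = ((n : ℝ) + 1) * (‖z‖ * ‖w‖) ^ n * ‖f w‖ := by
                    simp only [G, norm_mul, norm_pow, RCLike.norm_conj, hn, mul_pow]
                    ring
                _ ≤ _ := by gcongr; exact (mem_ball_zero_iff.1 hw).le
      _ = _ := integral_const_mul _ _
  have hterm (n : ℕ) : ∫ w in ball 0 r, G n w = π * r ^ 2 * (a n * (r ^ 2 * z) ^ n) := by
    rw [integral_const_mul, integral_ball_mul_conj_pow_of_hasSum ha n hr hrR]
    field_simp
    ring
  have hrz : r ^ 2 * z ∈ ball (0 : ℂ) R := by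
    rw [mem_ball_zero_iff, norm_mul, norm_pow, Complex.norm_real, Real.norm_of_nonneg hr]
    nlinarith [norm_nonneg z]
  have hseries := hasSum_setIntegral_of_hasSum measurableSet_ball hG hGi hsum
  simp only [hterm] at hseries
  exact hseries.unique ((ha _ hrz).mul_left _)

theorem MeasureTheory.IntegrableOn.div_one_sub_mul_conj_sq {f : ℂ → ℂ} {r : ℝ} {z : ℂ}
    (hfi : IntegrableOn f (ball 0 r)) (hz : ‖z‖ * r < 1) :
    IntegrableOn (fun w => f w / (1 - z * conj w) ^ 2) (ball 0 r) := by
  have hne (w : ℂ) (hw : w ∈ closedBall 0 r) : (1 - z * conj w) ^ 2 ≠ 0 := by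
    refine pow_ne_zero 2 (sub_ne_zero.2 fun h => ?_)
    simpa [← h] using norm_mul_conj_lt_one hz (mem_closedBall_zero_iff.1 hw)
  have hc : ContinuousOn (fun w : ℂ => ((1 - z * conj w) ^ 2)⁻¹) (closedBall 0 r) :=
    ContinuousOn.inv₀ (by fun_prop) hne
  simpa only [div_eq_mul_inv] using hfi.mul_continuousOn_of_subset hc measurableSet_ball
    (isCompact_closedBall 0 r) ball_subset_closedBall

/-- Reproducing property of the Bergman kernel of the unit disk: if `f` is
holomorphic and square-integrable on the open unit disk, then for every `z`
in the disk, `f z = (1/π) ∫_{|w|<1} f w / (1 - z * conj w)^2 dA(w)`. -/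
theorem bergman_reproducing_unit_disk (f : ℂ → ℂ)
    (hf : DifferentiableOn ℂ f (ball (0 : ℂ) 1))
    (hL2 : IntegrableOn (fun w => ‖f w‖ ^ 2) (ball (0 : ℂ) 1)) :
    ∀ z ∈ ball (0 : ℂ) 1,
      f z = (1 / (Real.pi : ℂ)) *
        ∫ w in ball (0 : ℂ) 1, f w / (1 - z * (starRingEnd ℂ) w) ^ 2 := by
  intro z hz
  have hz1 : ‖z‖ < 1 := mem_ball_zero_iff.1 hz
  have hfi : IntegrableOn f (ball 0 1) := .of_integrableOn_norm_sq measure_ball_lt_top.ne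
    (hf.continuousOn.aestronglyMeasurable measurableSet_ball) hL2
  have htaylor (w : ℂ) (hw : w ∈ ball 0 1) :
      HasSum (fun m => ((m.factorial : ℂ)⁻¹ * iteratedDeriv m f 0) * w ^ m) (f w) := by
    simpa [mul_comm, mul_left_comm] using Complex.hasSum_taylorSeries_on_ball hf hw
  have hball : ∀ᶠ r in 𝓝[<] (1 : ℝ),
      ∫ w in ball 0 r, f w / (1 - z * conj w) ^ 2 = π * r ^ 2 * f (r ^ 2 * z) := by
    filter_upwards [Ioo_mem_nhdsLT zero_lt_one] with r ⟨hr0, hr1⟩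
    exact integral_ball_div_one_sub_mul_conj_sq_of_hasSum htaylor
      (hfi.mono_set (ball_subset_ball hr1.le)) hr0.le hr1 (by nlinarith [norm_nonneg z])
  have hdilate : Tendsto (fun r : ℝ => π * r ^ 2 * f (r ^ 2 * z)) (𝓝[<] 1) (𝓝 (π * f z)) := by
    have hfz : ContinuousAt f z := (hf.differentiableAt (isOpen_ball.mem_nhds hz)).continuousAt
    have : ContinuousAt (fun r : ℝ => π * r ^ 2 * f (r ^ 2 * z)) 1 :=
      (by fun_prop : ContinuousAt (fun r : ℝ => (π : ℂ) * r ^ 2) 1).mul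
        (hfz.comp_of_eq (by fun_prop) (by simp))
    simpa using this.tendsto.mono_left nhdsWithin_le_nhds
  have hlim := tendsto_nhds_unique ((tendsto_setIntegral_ball_nhdsLT
    (hfi.div_one_sub_mul_conj_sq (by rwa [mul_one]))).congr' hball) hdilate
  rw [hlim]
  field_simp
end

section
/- Let D = {(z₁,z₂) ∈ ℂ² : |z₂| < 1/(1+|z₁|)}. Then every function f : ℂ² → ℂ that is holomorphic on D and satisfies ∫_D |f|² dV < ∞ vanishes at the origin: f(0,0) = 0. -/
/-!
For fixed `z₁`, the slice `z₂ ↦ f (z₁, z₂)` is holomorphic on the disc of radius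
`ρ(z₁) = 1 / (1 + ‖z₁‖)`. The mean value property of `f ^ 2` on circles, integrated in polar
coordinates, gives the area sub-mean-value inequality
`π ρ(z₁)² ‖f (z₁, 0)‖² ≤ ∫_{‖z₂‖ < ρ(z₁)} ‖f (z₁, z₂)‖²`, so by Tonelli the entire function
`g z = f (z, 0)` satisfies `∫ π ‖g z‖² / (1 + ‖z‖)² < ∞`. The same polar-coordinate argument
bounds this integral below by `2π ‖g 0‖² ∫₀^∞ π r / (1 + r)² dr`, and the radial integral
diverges; hence `g 0 = 0`.
-/

open MeasureTheory Metric Set Real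
open scoped ENNReal

theorem circleMap_eq_add_polarCoord_symm (c : ℂ) (p : ℝ × ℝ) :
    circleMap c p.1 p.2 = c + Complex.polarCoord.symm p := by
  simp [circleMap, Complex.exp_mul_I]

section SubMeanValue

variable {h : ℂ → ℂ} {c : ℂ}

theorem ofReal_two_pi_mul_enorm_sq_le_lintegral_circleMap {r : ℝ}
    (hh : DiffContOnCl ℂ h (ball c |r|)) :
    ENNReal.ofReal (2 * π) * ‖h c‖ₑ ^ 2 ≤
      ∫⁻ θ in Ioo (-π) π, ‖h (circleMap c r θ)‖ₑ ^ 2 := by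
  have hmean : circleAverage (fun z ↦ h z ^ 2) c r = h c ^ 2 :=
    ((differentiable_pow 2).comp_diffContOnCl (g := h) hh).circleAverage (f := (· ^ 2) ∘ h)
  have hperiodic : Function.Periodic (fun θ ↦ h (circleMap c r θ) ^ 2) (2 * π) := fun θ ↦ by
    simp only [periodic_circleMap c r θ]
  calc ENNReal.ofReal (2 * π) * ‖h c‖ₑ ^ 2
      = ‖(2 * π) • circleAverage (fun z ↦ h z ^ 2) c r‖ₑ := by
        rw [hmean, enorm_smul, enorm_pow, Real.enorm_of_nonneg two_pi_pos.le]
    _ = ‖∫ θ in Ioc (-π) π, h (circleMap c r θ) ^ 2‖ₑ := by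
        rw [circleAverage_def, smul_smul, mul_inv_cancel₀ two_pi_pos.ne', one_smul,
          ← zero_add (2 * π), hperiodic.intervalIntegral_add_eq 0 (-π),
          intervalIntegral.integral_of_le (by linarith [pi_pos])]
        ring_nf
    _ ≤ ∫⁻ θ in Ioc (-π) π, ‖h (circleMap c r θ) ^ 2‖ₑ := enorm_integral_le_lintegral_enorm _
    _ = ∫⁻ θ in Ioo (-π) π, ‖h (circleMap c r θ)‖ₑ ^ 2 := by
        simp only [setLIntegral_congr Ioo_ae_eq_Ioc, enorm_pow]

theorem lintegral_radial_weight_mul_enorm_sq_le {U : Set ℂ} (hh : DifferentiableOn ℂ h U)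
    {S : Set ℝ} (hS : MeasurableSet S) (hS0 : S ⊆ Ioi 0) (hSU : ∀ r ∈ S, closedBall c r ⊆ U)
    {w : ℝ → ℝ≥0∞} (hw : Measurable w) :
    (∫⁻ r in S, ENNReal.ofReal r * w r) * (ENNReal.ofReal (2 * π) * ‖h c‖ₑ ^ 2) ≤
      ∫⁻ z in {z | dist z c ∈ S}, w (dist z c) * ‖h z‖ₑ ^ 2 := by
  set A := {z | dist z c ∈ S}
  set G : ℂ → ℝ≥0∞ := fun z ↦ w (dist z c) * ‖h z‖ₑ ^ 2
  have hA : MeasurableSet A := hS.preimage (continuous_id.dist continuous_const).measurable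
  have hdist : ∀ r ∈ S, ∀ θ, dist (circleMap c r θ) c = r := fun r hr θ ↦ by
    rw [dist_eq_norm, circleMap_sub_center, norm_circleMap_zero, abs_of_pos (hS0 hr)]
  have hmeas : AEMeasurable (fun p : ℝ × ℝ ↦ ENNReal.ofReal p.1 * (w p.1 *
      ‖h (circleMap c p.1 p.2)‖ₑ ^ 2)) ((volume.prod volume).restrict (S ×ˢ Ioo (-π) π)) := by
    have hcont : ContinuousOn (fun p : ℝ × ℝ ↦ h (circleMap c p.1 p.2)) (S ×ˢ Ioo (-π) π) := by
      refine hh.continuousOn.comp (by fun_prop) fun p hp ↦ hSU p.1 hp.1 ?_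
      rw [mem_closedBall, hdist p.1 hp.1]
    exact measurable_fst.ennreal_ofReal.aemeasurable.mul ((hw.comp measurable_fst).aemeasurable.mul
      ((hcont.aemeasurable (hS.prod measurableSet_Ioo)).enorm.pow_const 2))
  calc (∫⁻ r in S, ENNReal.ofReal r * w r) * (ENNReal.ofReal (2 * π) * ‖h c‖ₑ ^ 2)
      ≤ ∫⁻ r in S, ENNReal.ofReal r * w r * (ENNReal.ofReal (2 * π) * ‖h c‖ₑ ^ 2) :=
        lintegral_mul_const_le _ _
    _ ≤ ∫⁻ r in S, ∫⁻ θ in Ioo (-π) π, ENNReal.ofReal r * (w r * ‖h (circleMap c r θ)‖ₑ ^ 2) := by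
        refine setLIntegral_mono' hS fun r hr ↦ ?_
        grw [mul_assoc, ← lintegral_const_mul_le, ← lintegral_const_mul_le,
          ofReal_two_pi_mul_enorm_sq_le_lintegral_circleMap (r := r)]
        rw [abs_of_pos (hS0 hr)]
        exact hh.diffContOnCl_ball (hSU r hr)
    _ = ∫⁻ p in S ×ˢ Ioo (-π) π, ENNReal.ofReal p.1 * (w p.1 * ‖h (circleMap c p.1 p.2)‖ₑ ^ 2) := by
        rw [Measure.volume_eq_prod, setLIntegral_prod _ hmeas]
    _ = ∫⁻ p in S ×ˢ Ioo (-π) π,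
          ENNReal.ofReal p.1 • A.indicator G (c + Complex.polarCoord.symm p) := by
        refine setLIntegral_congr_fun (hS.prod measurableSet_Ioo) fun p hp ↦ ?_
        have hmem : circleMap c p.1 p.2 ∈ A := by simpa [A, hdist p.1 hp.1] using hp.1
        rw [← circleMap_eq_add_polarCoord_symm, indicator_of_mem hmem]
        simp only [G, hdist p.1 hp.1, smul_eq_mul]
    _ ≤ ∫⁻ p in polarCoord.target,
          ENNReal.ofReal p.1 • A.indicator G (c + Complex.polarCoord.symm p) :=
        lintegral_mono_set (prod_mono hS0 subset_rfl)
    _ = ∫⁻ z in A, G z := by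
        rw [Complex.lintegral_comp_polarCoord_symm (fun z ↦ A.indicator G (c + z)),
          lintegral_add_left_eq_self, lintegral_indicator hA]

theorem setLIntegral_Ioo_zero_ofReal {ρ : ℝ} (hρ : 0 ≤ ρ) :
    ∫⁻ r in Ioo 0 ρ, ENNReal.ofReal r = ENNReal.ofReal (ρ ^ 2 / 2) := by
  have hint : IntegrableOn (fun r : ℝ ↦ r) (Ioo 0 ρ) :=
    (continuous_id.integrableOn_Icc (a := 0) (b := ρ)).mono_set Ioo_subset_Icc_self
  rw [← ofReal_integral_eq_lintegral_ofReal hint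
      ((ae_restrict_iff' measurableSet_Ioo).2 (ae_of_all _ fun r hr ↦ hr.1.le)),
    setIntegral_congr_set Ioo_ae_eq_Ioc, ← intervalIntegral.integral_of_le hρ, integral_id]
  norm_num

theorem volume_ball_mul_enorm_sq_le_setLIntegral {ρ : ℝ} (hh : DifferentiableOn ℂ h (ball c ρ)) :
    volume (ball c ρ) * ‖h c‖ₑ ^ 2 ≤ ∫⁻ z in ball c ρ, ‖h z‖ₑ ^ 2 := by
  rcases le_or_gt ρ 0 with hρ | hρ
  · simp [ball_eq_empty.2 hρ]
  have hvol : volume (ball c ρ) = ENNReal.ofReal (ρ ^ 2 / 2) * ENNReal.ofReal (2 * π) := by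
    rw [Complex.volume_ball, ← ENNReal.ofReal_mul (by positivity), ← ENNReal.ofReal_pow hρ.le,
      ← ENNReal.ofReal_coe_nnreal, NNReal.coe_real_pi, ← ENNReal.ofReal_mul (by positivity)]
    ring_nf
  calc volume (ball c ρ) * ‖h c‖ₑ ^ 2
      = (∫⁻ r in Ioo 0 ρ, ENNReal.ofReal r * 1) * (ENNReal.ofReal (2 * π) * ‖h c‖ₑ ^ 2) := by
        rw [hvol, mul_assoc]
        simp only [mul_one, setLIntegral_Ioo_zero_ofReal hρ.le]
    _ ≤ ∫⁻ z in {z | dist z c ∈ Ioo 0 ρ}, 1 * ‖h z‖ₑ ^ 2 :=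
        lintegral_radial_weight_mul_enorm_sq_le hh measurableSet_Ioo (fun _ hr ↦ hr.1)
          (fun _ hr ↦ closedBall_subset_ball hr.2) measurable_const
    _ ≤ ∫⁻ z in ball c ρ, ‖h z‖ₑ ^ 2 := by
        simp only [one_mul]
        exact lintegral_mono_set fun z hz ↦ mem_ball.2 hz.2

theorem eq_zero_of_lintegral_weight_mul_enorm_sq_ne_top (hh : Differentiable ℂ h) {w : ℝ → ℝ≥0∞}
    (hw : Measurable w) (hw_top : ∫⁻ r in Ioi 0, ENNReal.ofReal r * w r = ∞)
    (hfin : ∫⁻ z, w (dist z c) * ‖h z‖ₑ ^ 2 ≠ ∞) : h c = 0 := by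
  have key := lintegral_radial_weight_mul_enorm_sq_le (c := c) hh.differentiableOn
    measurableSet_Ioi subset_rfl (fun _ _ ↦ subset_univ _) hw
  by_contra hne
  rw [hw_top, ENNReal.top_mul (by simp [hne, pi_pos])] at key
  exact hfin (top_le_iff.1 (key.trans (setLIntegral_le_lintegral _ _)))

end SubMeanValue

theorem lintegral_Ioi_ofReal_mul_volume_ball_eq_top :
    ∫⁻ r in Ioi 0, ENNReal.ofReal r * volume (ball (0 : ℂ) (1 / (1 + r))) = ∞ := by
  have hdiv : ∫⁻ r in Ioi 1, ENNReal.ofReal (π / 4 * r⁻¹) = ∞ := by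
    by_contra hfin
    refine not_integrableOn_Ioi_inv (a := 1) ?_
    have := (lintegral_ofReal_ne_top_iff_integrable (by fun_prop)
      ((ae_restrict_iff' measurableSet_Ioi).2 (ae_of_all _ fun r hr ↦ ?_))).1 hfin
    · exact (integrable_const_mul_iff (by simp [pi_pos.ne']) _).1 this
    · have : (0 : ℝ) < r := one_pos.trans hr
      positivity
  refine top_le_iff.1 (hdiv ▸ ?_)
  calc ∫⁻ r in Ioi 1, ENNReal.ofReal (π / 4 * r⁻¹)
      ≤ ∫⁻ r in Ioi 1, ENNReal.ofReal r * volume (ball (0 : ℂ) (1 / (1 + r))) := by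
        refine setLIntegral_mono' measurableSet_Ioi fun r (hr : 1 < r) ↦ ?_
        have hr0 : 0 < r := one_pos.trans hr
        rw [Complex.volume_ball, ← ENNReal.ofReal_pow (by positivity), ← ENNReal.ofReal_coe_nnreal,
          NNReal.coe_real_pi, ← ENNReal.ofReal_mul (by positivity), ← ENNReal.ofReal_mul hr0.le]
        refine ENNReal.ofReal_le_ofReal ?_
        have hsq : 1 / (4 * r ^ 2) ≤ (1 / (1 + r)) ^ 2 := by
          rw [div_pow, one_pow]
          exact one_div_le_one_div_of_le (by positivity) (by nlinarith)
        calc π / 4 * r⁻¹ = r * (1 / (4 * r ^ 2) * π) := by field_simp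
          _ ≤ r * ((1 / (1 + r)) ^ 2 * π) := by gcongr
    _ ≤ ∫⁻ r in Ioi 0, ENNReal.ofReal r * volume (ball (0 : ℂ) (1 / (1 + r))) :=
        lintegral_mono_set (Ioi_subset_Ioi zero_le_one)

theorem lintegral_setLIntegral_prodMk_preimage {α β : Type*} [MeasurableSpace α] [MeasurableSpace β]
    {μ : Measure α} {ν : Measure β} [SFinite μ] [SFinite ν] {D : Set (α × β)} (hD : MeasurableSet D)
    {F : α × β → ℝ≥0∞} (hF : AEMeasurable F ((μ.prod ν).restrict D)) :
    ∫⁻ x, ∫⁻ y in Prod.mk x ⁻¹' D, F (x, y) ∂ν ∂μ = ∫⁻ p in D, F p ∂μ.prod ν := by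
  rw [← lintegral_indicator hD, lintegral_prod _ ((aemeasurable_indicator_iff hD).2 hF)]
  refine lintegral_congr fun x ↦ ?_
  rw [← lintegral_indicator (measurable_prodMk_left hD)]
  rfl

/-- On the domain `D = {(z₁,z₂) ∈ ℂ² : |z₂| < 1/(1+|z₁|)}`, every
square-integrable holomorphic function vanishes at the origin. -/
theorem sqInt_holomorphic_vanishes_at_origin
    (f : ℂ × ℂ → ℂ)
    (hf : DifferentiableOn ℂ f {p : ℂ × ℂ | ‖p.2‖ < 1 / (1 + ‖p.1‖)})
    (hL2 : IntegrableOn (fun p => ‖f p‖ ^ 2)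
      {p : ℂ × ℂ | ‖p.2‖ < 1 / (1 + ‖p.1‖)}) :
    f (0, 0) = 0 := by
  set D := {p : ℂ × ℂ | ‖p.2‖ < 1 / (1 + ‖p.1‖)}
  have hD : IsOpen D :=
    isOpen_lt (by fun_prop) (continuous_const.div (by fun_prop) fun _ ↦ by positivity)
  have hslice (z : ℂ) : Prod.mk z ⁻¹' D = ball 0 (1 / (1 + ‖z‖)) := by ext; simp [D]
  have hfin : ∫⁻ p in D, ‖f p‖ₑ ^ 2 ≠ ∞ := by
    simpa [HasFiniteIntegral, enorm_pow] using hL2.2.ne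
  have hentire : Differentiable ℂ fun z ↦ f (z, 0) := fun z ↦
    (hf.differentiableAt (hD.mem_nhds (by simp [D]; positivity))).comp z
      (differentiableAt_id.prodMk (differentiableAt_const 0))
  refine eq_zero_of_lintegral_weight_mul_enorm_sq_ne_top hentire (c := 0)
    (by simp only [Complex.volume_ball]; fun_prop) lintegral_Ioi_ofReal_mul_volume_ball_eq_top
    (ne_top_of_le_ne_top hfin ?_)
  calc ∫⁻ z, volume (ball (0 : ℂ) (1 / (1 + dist z 0))) * ‖f (z, 0)‖ₑ ^ 2
      ≤ ∫⁻ z, ∫⁻ w in Prod.mk z ⁻¹' D, ‖f (z, w)‖ₑ ^ 2 := lintegral_mono fun z ↦ by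
        rw [hslice, dist_zero_right]
        exact volume_ball_mul_enorm_sq_le_setLIntegral <|
          hf.comp ((differentiableOn_const z).prodMk differentiableOn_id)
            fun w hw ↦ (hslice z ▸ hw : w ∈ Prod.mk z ⁻¹' D)
    _ = ∫⁻ p in D, ‖f p‖ₑ ^ 2 := by
        rw [Measure.volume_eq_prod]
        exact lintegral_setLIntegral_prodMk_preimage hD.measurableSet
          ((hf.continuousOn.aemeasurable hD.measurableSet).enorm.pow_const 2)
end

section
/- Let D = {(z₁,z₂) ∈ ℂ² : |z₂| < 1/(1+|z₁|)}. Then the Lebesgue volume of D is infinite (so nonzero constant functions are not square-integrable on D), while the holomorphic function (z₁,z₂) ↦ z₂ is square-integrable on D: ∫_D |z₂|² dV < ∞. -/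
/-!
Slicing `D` over the `z₁`-plane gives discs of radius `(1 + ‖z₁‖)⁻¹`, so by Tonelli
`vol D = π ∫ (1 + ‖z₁‖)⁻²` and `∫_D ‖z₂‖² ≤ π ∫ (1 + ‖z₁‖)⁻⁴`, integrals over `ℂ ≅ ℝ²`.
The second converges since `4 > 2`; in polar coordinates the first becomes
`∫ r (1 + r)⁻² dr`, which diverges like `∫ dr / r`.
-/

open MeasureTheory Set Metric Module
open scoped ENNReal

lemma not_integrableOn_Ioi_pow_mul_one_add_rpow_neg {n : ℕ} (hn : n ≠ 0) :
    ¬ IntegrableOn (fun y : ℝ => y ^ (n - 1) * (1 + y) ^ (-(n : ℝ))) (Ioi 0) := by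
  intro h
  -- on `(1, ∞)` the integrand is at least `2⁻ⁿ y⁻¹`
  refine not_integrableOn_Ioi_inv (a := (1 : ℝ)) ?_
  refine ((h.mono_set (Ioi_subset_Ioi zero_le_one)).const_mul (2 ^ n)).mono'
    measurable_inv.aestronglyMeasurable ?_
  filter_upwards [ae_restrict_mem measurableSet_Ioi] with y (hy : 1 < y)
  have hy0 : 0 < y := zero_lt_one.trans hy
  have hpow : y ^ (n - 1) * y = y ^ n := by rw [← pow_succ, Nat.sub_add_cancel (by omega)]
  have hle : (1 + y) ^ n ≤ 2 ^ n * y ^ n := by rw [← mul_pow]; gcongr; linarith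
  rw [Real.norm_of_nonneg (inv_nonneg.2 hy0.le), Real.rpow_neg (by positivity),
    Real.rpow_natCast, inv_le_iff_one_le_mul₀ hy0]
  calc (1 : ℝ) = (1 + y) ^ n * ((1 + y) ^ n)⁻¹ := (mul_inv_cancel₀ (by positivity)).symm
    _ ≤ 2 ^ n * y ^ n * ((1 + y) ^ n)⁻¹ := by gcongr
    _ = 2 ^ n * (y ^ (n - 1) * ((1 + y) ^ n)⁻¹) * y := by rw [← hpow]; ring

lemma lintegral_one_add_norm_rpow_neg_eq_top {E : Type*} [NormedAddCommGroup E]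
    [NormedSpace ℝ E] [FiniteDimensional ℝ E] [Nontrivial E] [MeasurableSpace E] [BorelSpace E]
    (μ : Measure E) [μ.IsAddHaarMeasure] {r : ℝ} (hr : r ≤ finrank ℝ E) :
    ∫⁻ x, ENNReal.ofReal ((1 + ‖x‖) ^ (-r)) ∂μ = ∞ := by
  set n := finrank ℝ E
  have hdiv : ¬ Integrable (fun x : E => (1 + ‖x‖) ^ (-(n : ℝ))) μ := by
    rw [integrable_fun_norm_addHaar μ (f := fun y => (1 + y) ^ (-(n : ℝ)))]
    exact not_integrableOn_Ioi_pow_mul_one_add_rpow_neg finrank_pos.ne'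
  have htop : ∫⁻ x, ENNReal.ofReal ((1 + ‖x‖) ^ (-(n : ℝ))) ∂μ = ∞ := by
    by_contra h
    exact hdiv ((lintegral_ofReal_ne_top_iff_integrable
      (by fun_prop : Measurable fun x : E => (1 + ‖x‖) ^ (-(n : ℝ))).aestronglyMeasurable
      (ae_of_all _ fun x => by positivity)).1 h)
  refine top_unique (htop.symm.le.trans (lintegral_mono fun x => ?_))
  gcongr
  simp

lemma preimage_mk_setOf_norm_snd_lt {X : Type*} (R : X → ℝ) (x : X) :
    Prod.mk x ⁻¹' {p : X × ℂ | ‖p.2‖ < R p.1} = ball 0 (R x) := by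
  ext y; simp

lemma setLIntegral_norm_sq_ball_le (r : ℝ) :
    ∫⁻ y in ball (0 : ℂ) r, ENNReal.ofReal (‖y‖ ^ 2) ≤ ENNReal.ofReal r ^ 4 * NNReal.pi := by
  calc ∫⁻ y in ball (0 : ℂ) r, ENNReal.ofReal (‖y‖ ^ 2)
      ≤ ∫⁻ _ in ball (0 : ℂ) r, ENNReal.ofReal r ^ 2 := by
        refine setLIntegral_mono measurable_const fun y hy => ?_
        rw [ENNReal.ofReal_pow (norm_nonneg y)]
        gcongr
        exact (mem_ball_zero_iff.1 hy).le
    _ = ENNReal.ofReal r ^ 4 * NNReal.pi := by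
        rw [setLIntegral_const, Complex.volume_ball]; ring

section DiscBundle

variable {X : Type*} [MeasurableSpace X] {μ : Measure X} {R : X → ℝ}

lemma measurableSet_setOf_norm_snd_lt (hR : Measurable R) :
    MeasurableSet {p : X × ℂ | ‖p.2‖ < R p.1} :=
  measurableSet_lt (by fun_prop) (by fun_prop)

lemma prod_volume_setOf_norm_snd_lt (hR : Measurable R) :
    μ.prod volume {p : X × ℂ | ‖p.2‖ < R p.1} =
      ∫⁻ x, ENNReal.ofReal (R x) ^ 2 * NNReal.pi ∂μ := by
  simp only [Measure.prod_apply (measurableSet_setOf_norm_snd_lt hR),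
    preimage_mk_setOf_norm_snd_lt, Complex.volume_ball]

lemma integrableOn_norm_snd_sq_setOf_norm_snd_lt [SFinite μ] (hR : Measurable R)
    (h : ∫⁻ x, ENNReal.ofReal (R x) ^ 4 ∂μ ≠ ∞) :
    IntegrableOn (fun p : X × ℂ => ‖p.2‖ ^ 2) {p | ‖p.2‖ < R p.1} (μ.prod volume) := by
  set S := {p : X × ℂ | ‖p.2‖ < R p.1}
  have hS : MeasurableSet S := measurableSet_setOf_norm_snd_lt hR
  set g : X × ℂ → ℝ≥0∞ := fun p => ENNReal.ofReal (‖p.2‖ ^ 2)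
  refine ⟨by fun_prop, ?_⟩
  rw [hasFiniteIntegral_iff_ofReal (ae_of_all _ fun p => by positivity), ← lintegral_indicator hS,
    lintegral_prod _ ((by fun_prop : Measurable g).indicator hS).aemeasurable]
  calc ∫⁻ x, (∫⁻ y, S.indicator g (x, y)) ∂μ
      = ∫⁻ x, (∫⁻ y in ball (0 : ℂ) (R x), ENNReal.ofReal (‖y‖ ^ 2)) ∂μ := by
        refine lintegral_congr fun x => ?_
        rw [← lintegral_indicator measurableSet_ball, ← preimage_mk_setOf_norm_snd_lt R x]
        rfl
    _ ≤ ∫⁻ x, ENNReal.ofReal (R x) ^ 4 * NNReal.pi ∂μ :=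
        lintegral_mono fun x => setLIntegral_norm_sq_ball_le _
    _ < ∞ := by
        rw [lintegral_mul_const _ (by fun_prop)]
        exact ENNReal.mul_lt_top h.lt_top ENNReal.coe_lt_top

end DiscBundle

/-- The domain `D = {(z₁,z₂) ∈ ℂ² : |z₂| < 1/(1+|z₁|)}` has infinite volume
(so nonzero constants are not square-integrable on `D`), while the holomorphic
function `(z₁,z₂) ↦ z₂` is square-integrable on `D`. -/
theorem volume_infinite_and_coordinate_sqInt :
    volume {p : ℂ × ℂ | ‖p.2‖ < 1 / (1 + ‖p.1‖)} = ⊤ ∧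
    IntegrableOn (fun p : ℂ × ℂ => ‖p.2‖ ^ 2)
      {p : ℂ × ℂ | ‖p.2‖ < 1 / (1 + ‖p.1‖)} := by
  have hR : Measurable fun x : ℂ => 1 / (1 + ‖x‖) := by fun_prop
  have hpow (k : ℕ) : (fun x : ℂ => ENNReal.ofReal (1 / (1 + ‖x‖)) ^ k) =
      fun x => ENNReal.ofReal ((1 + ‖x‖) ^ (-(k : ℝ))) := by
    ext x
    rw [← ENNReal.ofReal_pow (by positivity), Real.rpow_neg (by positivity), Real.rpow_natCast,
      one_div, inv_pow]
  rw [Measure.volume_eq_prod]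
  refine ⟨?_, integrableOn_norm_snd_sq_setOf_norm_snd_lt hR ?_⟩
  · rw [prod_volume_setOf_norm_snd_lt hR, lintegral_mul_const _ (by fun_prop), hpow 2,
      lintegral_one_add_norm_rpow_neg_eq_top volume (by simp),
      ENNReal.top_mul (by simp [NNReal.pi_ne_zero])]
  · rw [hpow 4]
    exact (finite_integral_one_add_norm (by rw [Complex.finrank_real_complex]; norm_num)).ne
end

section
/- Let q > 0 be a real number and let t be a nonzero complex number with |t| < 1. Then ∑_{k=0}^{∞} [Γ(q+2k+3) / ((2k+1)! · Γ(q+1))] · t^{2k} = ((q+1)/(2t)) · [(1−t)^{−(q+2)} − (1+t)^{−(q+2)}], where the powers of 1−t and 1+t are principal-branch complex powers. -/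
/-!
The coefficients `Γ(a + n) / (n! Γ(a))` are those of the binomial series of `(1 - t)^(-a)`.
With `a = q + 2` and `Γ(q + 2) = (q + 1) Γ(q + 1)`, the series in question is `(q + 1) / t` times
the odd part of that binomial series, and the odd part of `f` is `(f(t) - f(-t)) / 2`.
-/

open scoped Nat

theorem Complex.ringChoose_add_sub_one_eq_Gamma_div {a : ℂ} (ha : ∀ k : ℕ, a ≠ -k) (n : ℕ) :
    Ring.choose (a + n - 1) n = Gamma (a + n) / (n ! * Gamma a) := by
  have hfac : (n ! : ℂ) ≠ 0 := by exact_mod_cast n.factorial_ne_zero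
  rw [← Ring.multichoose_eq, mul_comm, ← div_div, Gamma_add_nat_div_Gamma_eq a ha,
    eq_div_iff hfac, mul_comm, ← nsmul_eq_mul, Ring.factorial_nsmul_multichoose_eq_ascPochhammer,
    Polynomial.ascPochhammer_smeval_eq_eval]

theorem Complex.hasSum_one_sub_cpow_neg {a x : ℂ} (ha : ∀ k : ℕ, a ≠ -k) (hx : ‖x‖ < 1) :
    HasSum (fun n : ℕ => Gamma (a + n) / (n ! * Gamma a) * x ^ n) ((1 - x) ^ (-a)) := by
  have := (one_div_one_sub_cpow_hasFPowerSeriesOnBall_zero a).hasSum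
    (y := x) (by simpa [← ofReal_norm] using hx)
  simpa [FormalMultilinearSeries.ofScalars_apply_eq, ringChoose_add_sub_one_eq_Gamma_div ha,
    cpow_neg, mul_comm] using this

theorem HasSum.odd_part {R : Type*} [CommRing R] [TopologicalSpace R] [IsTopologicalAddGroup R]
    {c : ℕ → R} {x A B : R} (hA : HasSum (fun n => c n * x ^ n) A)
    (hB : HasSum (fun n => c n * (-x) ^ n) B) :
    HasSum (fun k => 2 * (c (2 * k + 1) * x ^ (2 * k + 1))) (A - B) := by
  have hodd : Function.Injective (fun k : ℕ => 2 * k + 1) := fun a b h => by simp_all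
  have heven : ∀ n ∉ Set.range (fun k : ℕ => 2 * k + 1), c n * x ^ n - c n * (-x) ^ n = 0 := by
    intro n hn
    rw [(Nat.not_odd_iff_even.1 fun ⟨k, hk⟩ => hn ⟨k, hk.symm⟩).neg_pow, sub_self]
  refine ((hodd.hasSum_iff heven).2 (hA.sub hB)).congr_fun fun k => ?_
  simp only [Function.comp_apply, (odd_two_mul_add_one k).neg_pow]
  ring

open Complex in
/-- Closed form for the series of the weighted Bergman kernel of the disk with
weight `(1-|z|)^q`: for `q > 0` and `0 < |t| < 1`,
`∑_{k≥0} Γ(q+2k+3)/((2k+1)!·Γ(q+1)) · t^{2k}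
  = ((q+1)/(2t)) ((1-t)^{-(q+2)} - (1+t)^{-(q+2)})`. -/
theorem weighted_disk_kernel_closed_form (q : ℝ) (hq : 0 < q) (t : ℂ)
    (ht0 : t ≠ 0) (ht : ‖t‖ < 1) :
    HasSum
      (fun k : ℕ =>
        ((Real.Gamma (q + 2 * k + 3) : ℂ) /
          (((2 * k + 1).factorial : ℂ) * (Real.Gamma (q + 1) : ℂ))) * t ^ (2 * k))
      (((q : ℂ) + 1) / (2 * t) *
        ((1 - t) ^ (-((q : ℂ) + 2)) - (1 + t) ^ (-((q : ℂ) + 2)))) := by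
  have ha : ∀ k : ℕ, (q : ℂ) + 2 ≠ -k := fun k h => by
    have := congrArg re h
    simp only [add_re, ofReal_re, re_ofNat, neg_re, natCast_re] at this
    linarith [k.cast_nonneg (α := ℝ)]
  have hodd := (hasSum_one_sub_cpow_neg ha ht).odd_part
    (hasSum_one_sub_cpow_neg ha (x := -t) (by rwa [norm_neg]))
  rw [sub_neg_eq_add] at hodd
  have hq1 : (q : ℂ) + 1 ≠ 0 := by exact_mod_cast (by linarith : q + 1 ≠ 0)
  have hΓ : Gamma ((q : ℂ) + 2) = (q + 1) * Gamma (q + 1) := by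
    rw [← Gamma_add_one _ hq1, add_assoc, one_add_one_eq_two]
  have hΓ1 : Gamma ((q : ℂ) + 1) ≠ 0 := Gamma_ne_zero_of_re_pos (by simp; linarith)
  refine (hodd.mul_left (((q : ℂ) + 1) / (2 * t))).congr_fun fun k => ?_
  rw [← Gamma_ofReal, ← Gamma_ofReal, hΓ]
  push_cast
  rw [show (q : ℂ) + 2 + (2 * k + 1) = q + 2 * k + 3 by ring]
  field_simp
  ring
end

section
/- Let q > 0 be a real number. There exists a complex number t with |t| < 1 and t ≠ 0 such that (1−t)^{q+2} = (1+t)^{q+2} (principal-branch complex powers) if and only if q > 2. -/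
/-!
With `p = q + 2`, both `1 ± t` lie in the right half-plane, and `(1 - t)^p = (1 + t)^p` means
`p (log (1 - t) - log (1 + t)) ∈ 2πiℤ`. The real part forces `‖1 - t‖ = ‖1 + t‖`, so `t = b i`
is purely imaginary; then `1 - t = conj (1 + t)`, the logarithms differ by `-2i arctan b`, and
the condition becomes `p arctan b ∈ πℤ`. As `b` ranges over `(-1, 1) ∖ {0}`, `arctan b` ranges
over `(-π/4, π/4) ∖ {0}`, which contains a nonzero multiple of `π / p` iff `π / p < π / 4`,
i.e. `q > 2`.
-/

open Complex Real ComplexConjugate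

theorem Complex.cpow_eq_cpow_iff {z w : ℂ} (hz : z ≠ 0) (hw : w ≠ 0) (p : ℂ) :
    z ^ p = w ^ p ↔ ∃ n : ℤ, p * (log z - log w) = n * (2 * π * I) := by
  rw [cpow_def_of_ne_zero hz, cpow_def_of_ne_zero hw, exp_eq_exp_iff_exists_int]
  refine exists_congr fun n => ?_
  constructor <;> intro h <;> linear_combination h

theorem Complex.arg_eq_arctan {z : ℂ} (hz : 0 < z.re) : arg z = Real.arctan (z.im / z.re) := by
  obtain ⟨hlo, hhi⟩ := abs_lt.mp (abs_arg_lt_pi_div_two_iff.mpr (Or.inl hz))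
  rw [← tan_arg, Real.arctan_tan hlo hhi]

theorem Complex.log_conj_sub_log {z : ℂ} (hz : z.arg ≠ π) :
    log (conj z) - log z = -(2 * arg z) * I := by
  rw [log_conj z hz, ← neg_sub, sub_conj, log_im]
  push_cast
  ring

theorem Complex.log_one_sub_mul_I_sub_log_one_add_mul_I (b : ℝ) :
    log (1 - b * I) - log (1 + b * I) = -(2 * Real.arctan b) * I := by
  have hre : 0 < (1 + b * I).re := by simp
  have hconj : 1 - b * I = conj (1 + b * I) := by simp [sub_eq_add_neg]
  have hπ : (1 + b * I).arg ≠ π := fun h => by linarith [(arg_eq_pi_iff.mp h).1]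
  rw [hconj, log_conj_sub_log hπ, arg_eq_arctan hre]
  simp

theorem Complex.norm_one_sub_eq_norm_one_add_iff {t : ℂ} : ‖1 - t‖ = ‖1 + t‖ ↔ t.re = 0 := by
  rw [← sq_eq_sq₀ (norm_nonneg _) (norm_nonneg _), Complex.sq_norm, Complex.sq_norm,
    normSq_apply, normSq_apply]
  simp only [sub_re, sub_im, add_re, add_im, one_re, one_im]
  constructor <;> intro h <;> nlinarith

theorem one_sub_cpow_eq_one_add_cpow_iff {p : ℝ} (hp : p ≠ 0) {t : ℂ} (h₁ : 1 - t ≠ 0)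
    (h₂ : 1 + t ≠ 0) :
    (1 - t) ^ (p : ℂ) = (1 + t) ^ (p : ℂ) ↔
      t.re = 0 ∧ ∃ n : ℤ, p * Real.arctan t.im = n * π := by
  have hlog (h : t.re = 0) : log (1 - t) - log (1 + t) = -(2 * Real.arctan t.im) * I := by
    rw [← log_one_sub_mul_I_sub_log_one_add_mul_I, ← re_add_im t, h]
    simp
  rw [cpow_eq_cpow_iff h₁ h₂]
  constructor
  · rintro ⟨n, hn⟩
    have hre : t.re = 0 := by
      have hlog_re : p * (Real.log ‖1 - t‖ - Real.log ‖1 + t‖) = 0 := by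
        simpa [log_re] using congrArg re hn
      rw [← norm_one_sub_eq_norm_one_add_iff]
      exact Real.log_injOn_pos (norm_pos_iff.mpr h₁) (norm_pos_iff.mpr h₂)
        (sub_eq_zero.mp ((mul_eq_zero.mp hlog_re).resolve_left hp))
    refine ⟨hre, -n, ?_⟩
    rw [hlog hre] at hn
    have hlog_im : p * -(2 * Real.arctan t.im) = n * (2 * π) := by
      -- `ofReal_arctan` would turn `↑(Real.arctan _)` into `Complex.arctan _`
      simpa [-ofReal_arctan] using congrArg im hn
    push_cast
    linarith
  · rintro ⟨hre, n, hn⟩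
    refine ⟨-n, ?_⟩
    rw [hlog hre]
    have hn' : (p : ℂ) * (Real.arctan t.im : ℂ) = n * π := by exact_mod_cast hn
    push_cast [-ofReal_arctan]
    linear_combination (-2 * I) * hn'

theorem exists_one_sub_cpow_eq_one_add_cpow_iff {p : ℝ} (hp : p ≠ 0) :
    (∃ t : ℂ, ‖t‖ < 1 ∧ t ≠ 0 ∧ (1 - t) ^ (p : ℂ) = (1 + t) ^ (p : ℂ)) ↔
      ∃ b : ℝ, |b| < 1 ∧ b ≠ 0 ∧ ∃ n : ℤ, p * Real.arctan b = n * π := by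
  have hne {t : ℂ} (ht : ‖t‖ < 1) : 1 - t ≠ 0 ∧ 1 + t ≠ 0 := by
    constructor <;> intro h
    · simp [← sub_eq_zero.mp h] at ht
    · simp [eq_neg_of_add_eq_zero_right h] at ht
  constructor
  · rintro ⟨t, ht, ht0, heq⟩
    obtain ⟨hre, hn⟩ := (one_sub_cpow_eq_one_add_cpow_iff hp (hne ht).1 (hne ht).2).mp heq
    exact ⟨t.im, (abs_im_le_norm t).trans_lt ht, fun h => ht0 (ext hre h), hn⟩
  · rintro ⟨b, hb, hb0, hn⟩
    have hb' : ‖(b : ℂ) * I‖ < 1 := by simpa using hb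
    refine ⟨b * I, hb', by simpa using hb0, ?_⟩
    exact (one_sub_cpow_eq_one_add_cpow_iff hp (hne hb').1 (hne hb').2).mpr ⟨by simp, by simpa⟩

theorem Real.abs_arctan_lt_pi_div_four_iff {x : ℝ} : |arctan x| < π / 4 ↔ |x| < 1 := by
  rw [← arctan_one, abs_lt, abs_lt, ← arctan_neg, arctan_lt_arctan_iff, arctan_lt_arctan_iff]

theorem exists_abs_lt_one_arctan_iff {P : ℝ → Prop} :
    (∃ b : ℝ, |b| < 1 ∧ b ≠ 0 ∧ P (Real.arctan b)) ↔
      ∃ θ : ℝ, |θ| < π / 4 ∧ θ ≠ 0 ∧ P θ := by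
  constructor
  · rintro ⟨b, hb, hb0, h⟩
    exact ⟨Real.arctan b, abs_arctan_lt_pi_div_four_iff.mpr hb, by simpa using hb0, h⟩
  · rintro ⟨θ, hθ, hθ0, h⟩
    obtain ⟨hlo, hhi⟩ := abs_lt.mp hθ
    have hθ' : Real.arctan (Real.tan θ) = θ :=
      Real.arctan_tan (by linarith [pi_pos]) (by linarith [pi_pos])
    refine ⟨Real.tan θ, abs_arctan_lt_pi_div_four_iff.mp (hθ'.symm ▸ hθ),
      fun h0 => hθ0 ?_, hθ'.symm ▸ h⟩
    rw [← hθ', h0, Real.arctan_zero]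

theorem exists_abs_lt_mul_eq_int_mul_pi_iff {p c : ℝ} (hp : 0 < p) :
    (∃ θ : ℝ, |θ| < c ∧ θ ≠ 0 ∧ ∃ n : ℤ, p * θ = n * π) ↔ π < p * c := by
  constructor
  · rintro ⟨θ, hθc, hθ, n, hn⟩
    have hn0 : n ≠ 0 := by
      rintro rfl
      simp [hp.ne', hθ] at hn
    have hn1 : (1 : ℝ) ≤ |(n : ℝ)| := by exact_mod_cast Int.one_le_abs hn0
    calc π ≤ |(n : ℝ)| * π := le_mul_of_one_le_left pi_pos.le hn1
      _ = p * |θ| := by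
        rw [← abs_of_pos pi_pos, ← abs_mul, ← hn, abs_mul, abs_of_pos hp]
      _ < p * c := mul_lt_mul_of_pos_left hθc hp
  · intro h
    refine ⟨π / p, ?_, by positivity, 1, by simp [field]⟩
    rwa [abs_of_pos (by positivity), div_lt_iff₀ hp, mul_comm]

/-- For real `q > 0`, there is a nonzero `t` in the unit disk with
`(1-t)^{q+2} = (1+t)^{q+2}` (principal powers) if and only if `q > 2`. -/
theorem weighted_disk_kernel_zeroes_iff (q : ℝ) (hq : 0 < q) :
    (∃ t : ℂ, ‖t‖ < 1 ∧ t ≠ 0 ∧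
      (1 - t) ^ ((q : ℂ) + 2) = (1 + t) ^ ((q : ℂ) + 2)) ↔ 2 < q := by
  have hp : 0 < q + 2 := by linarith
  have hcast : (q : ℂ) + 2 = ((q + 2 : ℝ) : ℂ) := by push_cast; rfl
  calc _ ↔ ∃ b : ℝ, |b| < 1 ∧ b ≠ 0 ∧ ∃ n : ℤ, (q + 2) * Real.arctan b = n * π := by
        rw [hcast, exists_one_sub_cpow_eq_one_add_cpow_iff hp.ne']
    _ ↔ ∃ θ : ℝ, |θ| < π / 4 ∧ θ ≠ 0 ∧ ∃ n : ℤ, (q + 2) * θ = n * π :=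
        exists_abs_lt_one_arctan_iff (P := fun θ => ∃ n : ℤ, (q + 2) * θ = n * π)
    _ ↔ π < (q + 2) * (π / 4) := exists_abs_lt_mul_eq_int_mul_pi_iff hp
    _ ↔ 2 < q := by constructor <;> intro h <;> nlinarith [pi_pos]
end

section
/- Let p > 0 be a real number. There exists a complex number u with Re u > 0 and u ≠ 1 such that u^p = 1 (principal-branch complex power) if and only if p > 4. -/
/-!
Since `‖u ^ p‖ = ‖u‖ ^ p`, a solution of `u ^ p = 1` lies on the unit circle, `u = e^{iθ}` with
`θ = arg u`, and then the principal power is `e^{iθp}`, which is `1` exactly when `θp ∈ 2πℤ`.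
In the right half-plane `|θ| < π/2`, so `u ≠ 1` forces `2π ≤ |θ| p < πp/2`, i.e. `p > 4`;
conversely `θ = 2π/p` works when `p > 4`.
-/

open Complex Real

namespace Complex

theorem norm_eq_one_of_cpow_ofReal_eq_one {u : ℂ} {p : ℝ} (hp : p ≠ 0) (h : u ^ (p : ℂ) = 1) :
    ‖u‖ = 1 := by
  have h' : ‖u‖ ^ p = (1 : ℝ) ^ p := by rw [← norm_cpow_real, h, norm_one, one_rpow]
  exact (rpow_left_inj (norm_nonneg u) zero_le_one hp).mp h'

theorem cpow_ofReal_eq_one_iff_of_norm_eq_one {u : ℂ} (hu : ‖u‖ = 1) (p : ℝ) :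
    u ^ (p : ℂ) = 1 ↔ ∃ n : ℤ, arg u * p = n * (2 * π) := by
  have hu0 : u ≠ 0 := norm_ne_zero_iff.mp (by rw [hu]; exact one_ne_zero)
  have hlog : log u = arg u * I := by
    apply Complex.ext <;> simp [log_re, log_im, hu]
  rw [cpow_def_of_ne_zero hu0, hlog, exp_eq_one_iff]
  refine exists_congr fun n => ?_
  rw [show (arg u : ℂ) * I * p = ((arg u * p : ℝ) : ℂ) * I by push_cast; ring,
    show (n : ℂ) * (2 * π * I) = ((n * (2 * π) : ℝ) : ℂ) * I by push_cast; ring,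
    mul_left_inj' I_ne_zero, ofReal_inj]

theorem cpow_ofReal_eq_one_iff {u : ℂ} {p : ℝ} (hp : p ≠ 0) :
    u ^ (p : ℂ) = 1 ↔ ‖u‖ = 1 ∧ ∃ n : ℤ, arg u * p = n * (2 * π) :=
  ⟨fun h => have hu := norm_eq_one_of_cpow_ofReal_eq_one hp h
    ⟨hu, (cpow_ofReal_eq_one_iff_of_norm_eq_one hu p).mp h⟩,
   fun ⟨hu, hn⟩ => (cpow_ofReal_eq_one_iff_of_norm_eq_one hu p).mpr hn⟩

theorem arg_exp_ofReal_mul_I {θ : ℝ} (hθ : θ ∈ Set.Ioc (-π) π) : arg (exp (θ * I)) = θ := by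
  rw [exp_mul_I, arg_cos_add_sin_mul_I hθ]

theorem two_pi_le_abs_arg_mul_of_cpow_ofReal_eq_one {u : ℂ} {p : ℝ} (hp : 0 < p) (hne : u ≠ 1)
    (h : u ^ (p : ℂ) = 1) : 2 * π ≤ |arg u| * p := by
  obtain ⟨hu, n, hn⟩ := (cpow_ofReal_eq_one_iff hp.ne').mp h
  have harg : arg u ≠ 0 := fun h => hne (ext_norm_arg (by simpa using hu) (by simpa using h))
  have hn0 : n ≠ 0 := by
    rintro rfl
    exact harg (by simpa [hp.ne'] using hn)
  have hn1 : (1 : ℝ) ≤ |(n : ℝ)| := by exact_mod_cast Int.one_le_abs hn0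
  rw [← abs_of_pos hp, ← abs_mul, hn, abs_mul, abs_of_pos two_pi_pos]
  exact le_mul_of_one_le_left two_pi_pos.le hn1

end Complex

/-- For real `p > 0`, there is a `u ≠ 1` in the right half-plane with
`u^p = 1` (principal power) if and only if `p > 4`. -/
theorem cpow_eq_one_in_right_halfplane_iff (p : ℝ) (hp : 0 < p) :
    (∃ u : ℂ, 0 < u.re ∧ u ≠ 1 ∧ u ^ (p : ℂ) = 1) ↔ 4 < p := by
  constructor
  · rintro ⟨u, hre, hne, hpow⟩
    have hsmall : |arg u| < π / 2 := abs_arg_lt_pi_div_two_iff.mpr (Or.inl hre)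
    nlinarith [two_pi_le_abs_arg_mul_of_cpow_ofReal_eq_one hp hne hpow, pi_pos]
  · intro h4
    have hθ : 2 * π / p < π / 2 := by
      rw [div_lt_div_iff₀ hp two_pos]; nlinarith [pi_pos]
    have hθ0 : 0 < 2 * π / p := by positivity
    have harg : arg (exp ((2 * π / p : ℝ) * I)) = 2 * π / p :=
      arg_exp_ofReal_mul_I ⟨by linarith [pi_pos], by linarith [pi_pos]⟩
    refine ⟨exp ((2 * π / p : ℝ) * I), ?_, ?_, ?_⟩
    · rw [exp_ofReal_mul_I_re]
      exact cos_pos_of_mem_Ioo ⟨by linarith, hθ⟩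
    · intro h
      rw [h, arg_one] at harg
      exact hθ0.ne harg
    · refine (cpow_ofReal_eq_one_iff_of_norm_eq_one (norm_exp_ofReal_mul_I _) p).mpr ⟨1, ?_⟩
      rw [harg, div_mul_cancel₀ _ hp.ne']
      simp
end

section
/- Let k ≥ 1 be a natural number. The function F : ℂ³ → ℝ defined by F(z₁,z₂,z₃) = (|z₁|² + |z₂|² + |z₃|²)^{2k} + ∑_{ε ∈ {−1,1}³} (ε₁|z₁| + ε₂|z₂| + ε₃|z₃|)^{2k} (the sum running over all 8 choices of signs) is convex on ℂ³ (identified with ℝ⁶). -/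
/-!
Write the function as `G (‖z₁‖, ‖z₂‖, ‖z₃‖)` with
`G a = (∑ aⱼ²)^{2k} + ∑_ε (ε ⬝ᵥ a)^{2k}`. Both summands of `G` are convex on `ℝ³` and unchanged
when one coordinate changes sign. An even convex function of one real variable is nondecreasing on
`[0, ∞)`, because `t` lies on the segment `[-t', t']` whenever `|t| ≤ t'`; applied on coordinate
lines, this makes `G` monotone on the nonnegative orthant. A convex function that is monotone on
the orthant stays convex after composing with the convex nonnegative functions `z ↦ ‖zⱼ‖`.
-/

open Finset Function

theorem convexOn_sum {𝕜 E β ι : Type*} [Semiring 𝕜] [PartialOrder 𝕜] [AddCommMonoid E]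
    [AddCommMonoid β] [PartialOrder β] [IsOrderedAddMonoid β] [SMul 𝕜 E] [DistribMulAction 𝕜 β]
    {s : Set E} (t : Finset ι) {f : ι → E → β} (hs : Convex 𝕜 s)
    (hf : ∀ i ∈ t, ConvexOn 𝕜 s (f i)) : ConvexOn 𝕜 s (fun x => ∑ i ∈ t, f i x) := by
  refine ⟨hs, fun x hx y hy a b ha hb hab => ?_⟩
  calc ∑ i ∈ t, f i (a • x + b • y) ≤ ∑ i ∈ t, (a • f i x + b • f i y) :=
        sum_le_sum fun i hi => (hf i hi).2 hx hy ha hb hab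
    _ = a • ∑ i ∈ t, f i x + b • ∑ i ∈ t, f i y := by
        rw [sum_add_distrib, smul_sum, smul_sum]

theorem ConvexOn.comp_update {𝕜 E β ι : Type*} [Field 𝕜] [LinearOrder 𝕜] [AddCommGroup E]
    [Module 𝕜 E] [AddCommMonoid β] [PartialOrder β] [SMul 𝕜 β] [DecidableEq ι]
    {g : (ι → E) → β} (hg : ConvexOn 𝕜 Set.univ g) (a : ι → E) (j : ι) :
    ConvexOn 𝕜 Set.univ (fun t => g (update a j t)) := by
  set L := AffineMap.const 𝕜 E (update a j 0) + (LinearMap.single 𝕜 (fun _ => E) j).toAffineMap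
  have hL : ∀ t, L t = update a j t := fun t => by
    ext i
    rcases eq_or_ne i j with rfl | hij <;> simp [L, *]
  simpa only [Set.preimage_univ, comp_def, hL] using hg.comp_affineMap L

theorem ConvexOn.monotoneOn_Ici_of_even {f : ℝ → ℝ} (hf : ConvexOn ℝ Set.univ f)
    (heven : ∀ x, f (-x) = f x) : MonotoneOn f (Set.Ici 0) := by
  intro x hx y hy hxy
  have hmem : x ∈ segment ℝ (-y) y := by
    rw [segment_eq_Icc (by linarith [Set.mem_Ici.1 hy])]
    exact ⟨by linarith [Set.mem_Ici.1 hx], hxy⟩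
  simpa [heven] using hf.le_on_segment (Set.mem_univ _) (Set.mem_univ _) hmem

theorem monotoneOn_Ici_of_forall_update {ι α β : Type*} [Fintype ι] [DecidableEq ι]
    [Preorder α] [Preorder β] {c : ι → α} {g : (ι → α) → β}
    (h : ∀ a j, MonotoneOn (fun t => g (update a j t)) (Set.Ici (c j))) :
    MonotoneOn g (Set.Ici c) := by
  intro a ha b hb hab
  have hpiecewise : ∀ s : Finset ι, g a ≤ g (s.piecewise b a) := by
    intro s
    induction s using Finset.induction_on with
    | empty => simp
    | insert j s hj ih =>
      calc g a ≤ g (s.piecewise b a) := ih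
        _ = g (update (s.piecewise b a) j (a j)) := by
          rw [← s.piecewise_eq_of_notMem b a hj, update_eq_self]
        _ ≤ g ((insert j s).piecewise b a) := by
          rw [piecewise_insert]
          exact h _ j (ha j) (hb j) (hab j)
  simpa using hpiecewise univ

theorem ConvexOn.monotoneOn_Ici_of_update_neg {ι : Type*} [Fintype ι] [DecidableEq ι]
    {g : (ι → ℝ) → ℝ} (hg : ConvexOn ℝ Set.univ g)
    (hsymm : ∀ a j, g (update a j (-a j)) = g a) : MonotoneOn g (Set.Ici 0) :=
  monotoneOn_Ici_of_forall_update fun a j =>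
    (hg.comp_update a j).monotoneOn_Ici_of_even fun t => by
      simpa using hsymm (update a j t) j

theorem ConvexOn.comp_norm_apply {ι V : Type*} [Fintype ι] [DecidableEq ι]
    [SeminormedAddCommGroup V] [NormedSpace ℝ V] {g : (ι → ℝ) → ℝ}
    (hg : ConvexOn ℝ Set.univ g) (hsymm : ∀ a j, g (update a j (-a j)) = g a) :
    ConvexOn ℝ Set.univ (fun z : ι → V => g (fun j => ‖z j‖)) := by
  refine ⟨convex_univ, fun x _ y _ a b ha hb hab => ?_⟩
  have hnorm : (fun j => ‖(a • x + b • y) j‖) ≤ a • (fun j => ‖x j‖) + b • (fun j => ‖y j‖) :=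
    fun j => convexOn_univ_norm.2 trivial trivial ha hb hab
  have hcombo_nonneg : 0 ≤ a • (fun j => ‖x j‖) + b • (fun j => ‖y j‖) :=
    fun j => add_nonneg (mul_nonneg ha (norm_nonneg _)) (mul_nonneg hb (norm_nonneg _))
  exact (hg.monotoneOn_Ici_of_update_neg hsymm (fun j => norm_nonneg _) hcombo_nonneg hnorm).trans
    (hg.2 trivial trivial ha hb hab)

theorem Even.convexOn_pow_dotProduct {ι : Type*} [Fintype ι] {n : ℕ} (hn : Even n)
    (c : ι → ℝ) : ConvexOn ℝ Set.univ (fun a : ι → ℝ => (c ⬝ᵥ a) ^ n) :=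
  have hpow : ConvexOn ℝ Set.univ (fun x : ℝ => x ^ n) := hn.convexOn_pow
  hpow.comp_linearMap (dotProductBilin ℝ ℝ c)

theorem convexOn_sum_sq_pow (ι : Type*) [Fintype ι] (n : ℕ) :
    ConvexOn ℝ Set.univ (fun a : ι → ℝ => (∑ j, a j ^ 2) ^ n) := by
  have hsq : ConvexOn ℝ Set.univ (fun x : ℝ => x ^ 2) := even_two.convexOn_pow
  exact (convexOn_sum (f := fun j (a : ι → ℝ) => a j ^ 2) univ convex_univ fun j _ =>
    hsq.comp_linearMap (LinearMap.proj (φ := fun _ : ι => ℝ) j)).pow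
    (fun a _ => sum_nonneg fun j _ => sq_nonneg (a j)) n

theorem sum_sq_update_neg {ι : Type*} [Fintype ι] [DecidableEq ι] (a : ι → ℝ) (j : ι) :
    ∑ i, update a j (-a j) i ^ 2 = ∑ i, a i ^ 2 :=
  sum_congr rfl fun i _ => by rcases eq_or_ne i j with rfl | hij <;> simp [*]

noncomputable def signSum {ι : Type*} [Fintype ι] [DecidableEq ι] (n : ℕ) (a : ι → ℝ) : ℝ :=
  ∑ ε : ι → Bool, (∑ j, (if ε j then (1 : ℝ) else -1) * a j) ^ n

theorem convexOn_signSum {ι : Type*} [Fintype ι] [DecidableEq ι] {n : ℕ} (hn : Even n) :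
    ConvexOn ℝ Set.univ (signSum (ι := ι) n) :=
  convexOn_sum univ convex_univ fun _ _ => hn.convexOn_pow_dotProduct _

theorem signSum_update_neg {ι : Type*} [Fintype ι] [DecidableEq ι] (n : ℕ) (a : ι → ℝ)
    (j : ι) : signSum n (update a j (-a j)) = signSum n a := by
  have hflip : Involutive fun ε : ι → Bool => update ε j (!ε j) := fun ε => by simp
  refine Fintype.sum_bijective _ hflip.bijective _ _ fun ε => ?_
  congr 1
  refine sum_congr rfl fun i _ => ?_
  rcases eq_or_ne i j with rfl | hij
  · cases ε i <;> simp
  · simp [hij]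

theorem anh_defining_function_convex_general (k : ℕ) :
    ConvexOn ℝ Set.univ
      (fun z : Fin 3 → ℂ =>
        (∑ j, ‖z j‖ ^ 2) ^ (2 * k) +
        ∑ ε : Fin 3 → Bool,
          (∑ j, (if ε j then (1 : ℝ) else -1) * ‖z j‖) ^ (2 * k)) :=
  have hsq := ConvexOn.comp_norm_apply (V := ℂ) (convexOn_sum_sq_pow (Fin 3) (2 * k))
    fun a j => by rw [sum_sq_update_neg]
  have hsign := ConvexOn.comp_norm_apply (V := ℂ) (convexOn_signSum (ι := Fin 3) (even_two_mul k))
    (signSum_update_neg _)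
  hsq.add hsign

/-- Convexity of the defining function of Nguyên Viêt Anh's domain: for `k ≥ 1`,
the function `z ↦ (|z₁|²+|z₂|²+|z₃|²)^{2k} + ∑_{ε∈{±1}³} (ε₁|z₁|+ε₂|z₂|+ε₃|z₃|)^{2k}`
is convex on `ℂ³`. -/
theorem anh_defining_function_convex (k : ℕ) (hk : 1 ≤ k) :
    ConvexOn ℝ Set.univ
      (fun z : Fin 3 → ℂ =>
        (∑ j, ‖z j‖ ^ 2) ^ (2 * k) +
        ∑ ε : Fin 3 → Bool,
          (∑ j, (if ε j then (1 : ℝ) else -1) * ‖z j‖) ^ (2 * k)) :=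
  anh_defining_function_convex_general k
end

section
/- For each natural number k ≥ 1, let Ω_k = {(z₁,z₂) ∈ ℂ² : |z₂|^{2k}(1+|z₁|)^{2k} + |z₂|^{2k}(1−|z₁|)^{2k} + ((|z₁|²+|z₂|²)/k)^{k} < 1}, and let D = {(z₁,z₂) ∈ ℂ² : |z₂| < 1/(1+|z₁|)}. Then Ω_k ⊆ D for every k ≥ 1, and ⋃_{k≥1} Ω_k = D. -/
/-!
Writing `a = |z₁|`, `b = |z₂|`, the defining function of `Ω_k` is
`(b(1+a))^{2k} + (b(1-a))^{2k} + ((a² + b²)/k)^k`. Its first term is `< 1` only if `b(1+a) < 1`,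
which gives `Ω_k ⊆ D`. Conversely, on `D` we have `|b(1-a)| ≤ b(1+a) < 1`, so the first two terms
decay geometrically, while `((a² + b²)/k)^k → 0` because the base tends to `0`; hence every point
of `D` lies in `Ω_k` for all large `k`.
-/

/-- Nguyên Viêt Anh's algebraic approximating domains. -/
def anhDomain (k : ℕ) : Set (ℂ × ℂ) :=
  {p : ℂ × ℂ |
    ‖p.2‖ ^ (2 * k) * (1 + ‖p.1‖) ^ (2 * k) +
    ‖p.2‖ ^ (2 * k) * (1 - ‖p.1‖) ^ (2 * k) +
    ((‖p.1‖ ^ 2 + ‖p.2‖ ^ 2) / (k : ℝ)) ^ k < 1}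

/-- The limiting degenerate domain `{(z₁,z₂) : |z₂| < 1/(1+|z₁|)}`. -/
def limitDomain : Set (ℂ × ℂ) :=
  {p : ℂ × ℂ | ‖p.2‖ < 1 / (1 + ‖p.1‖)}

open Filter Topology

theorem tendsto_div_natCast_pow_atTop_nhds_zero (c : ℝ) :
    Tendsto (fun k : ℕ => (c / k) ^ k) atTop (𝓝 0) := by
  have hsmall : ∀ᶠ k : ℕ in atTop, |c / k| ≤ 1 / 2 :=
    (tendsto_const_div_atTop_nhds_zero_nat c).abs.eventually_le_const
      (by norm_num : |(0 : ℝ)| < 1 / 2)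
  refine squeeze_zero_norm' ?_ (tendsto_pow_atTop_nhds_zero_of_lt_one (r := (1 / 2 : ℝ))
    (by norm_num) (by norm_num))
  filter_upwards [hsmall] with k hk
  rw [norm_pow, Real.norm_eq_abs]
  exact pow_le_pow_left₀ (abs_nonneg _) hk k

theorem tendsto_pow_two_mul_atTop_nhds_zero {r : ℝ} (hr : |r| < 1) :
    Tendsto (fun k : ℕ => r ^ (2 * k)) atTop (𝓝 0) := by
  simp_rw [pow_mul]
  exact tendsto_pow_atTop_nhds_zero_of_abs_lt_one <| by
    simpa [abs_pow, sq_abs] using pow_lt_one₀ (abs_nonneg r) hr two_ne_zero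

theorem mem_limitDomain_iff {p : ℂ × ℂ} : p ∈ limitDomain ↔ ‖p.2‖ * (1 + ‖p.1‖) < 1 := by
  rw [limitDomain, Set.mem_ofPred_eq, lt_div_iff₀ (by positivity)]

theorem anhDomain_subset_limitDomain (k : ℕ) : anhDomain k ⊆ limitDomain := by
  intro p hp
  rw [anhDomain, Set.mem_ofPred_eq, ← mul_pow, ← mul_pow] at hp
  have hfirst : (‖p.2‖ * (1 + ‖p.1‖)) ^ (2 * k) < 1 := by
    have : 0 ≤ ((‖p.1‖ ^ 2 + ‖p.2‖ ^ 2) / (k : ℝ)) ^ k := by positivity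
    have : 0 ≤ (‖p.2‖ * (1 - ‖p.1‖)) ^ (2 * k) := (even_two_mul k).pow_nonneg _
    linarith
  rcases Nat.eq_zero_or_pos k with rfl | hk
  · simp at hfirst -- `Ω₀ = ∅`: all three terms equal `1`
  · exact mem_limitDomain_iff.2 <|
      (pow_lt_one_iff_of_nonneg (by positivity) (by omega)).1 hfirst

theorem tendsto_anhDomain_defining_function {p : ℂ × ℂ} (hp : p ∈ limitDomain) :
    Tendsto (fun k : ℕ => ‖p.2‖ ^ (2 * k) * (1 + ‖p.1‖) ^ (2 * k) +
      ‖p.2‖ ^ (2 * k) * (1 - ‖p.1‖) ^ (2 * k) +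
      ((‖p.1‖ ^ 2 + ‖p.2‖ ^ 2) / (k : ℝ)) ^ k) atTop (𝓝 0) := by
  have hplus : ‖p.2‖ * (1 + ‖p.1‖) < 1 := mem_limitDomain_iff.1 hp
  have hminus : |‖p.2‖ * (1 - ‖p.1‖)| ≤ ‖p.2‖ * (1 + ‖p.1‖) := by
    rw [abs_mul, abs_norm]
    gcongr
    exact (abs_sub _ _).trans (by simp)
  have hplus_abs : |‖p.2‖ * (1 + ‖p.1‖)| < 1 := by rwa [abs_of_nonneg (by positivity)]
  simp_rw [← mul_pow]
  simpa using ((tendsto_pow_two_mul_atTop_nhds_zero hplus_abs).add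
    (tendsto_pow_two_mul_atTop_nhds_zero (hminus.trans_lt hplus))).add
    (tendsto_div_natCast_pow_atTop_nhds_zero _)

/-- The domains `Ω_k` approximate `D = {|z₂| < 1/(1+|z₁|)}` from inside:
each `Ω_k` (for `k ≥ 1`) is contained in `D`, and their union is `D`. -/
theorem anh_domains_exhaust :
    (∀ k : ℕ, 1 ≤ k → anhDomain k ⊆ limitDomain) ∧
    (⋃ k ∈ {k : ℕ | 1 ≤ k}, anhDomain k) = limitDomain := by
  refine ⟨fun k _ => anhDomain_subset_limitDomain k,
    (Set.iUnion₂_subset fun k _ => anhDomain_subset_limitDomain k).antisymm fun p hp => ?_⟩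
  obtain ⟨k, hmem, hk⟩ := ((tendsto_anhDomain_defining_function hp).eventually_lt_const
    one_pos |>.and (eventually_ge_atTop 1)).exists
  exact Set.mem_biUnion hk hmem
end
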